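/- arXiv:2603.12142 — 8 statements merged into one kernel-verified Lean document; each statement's English description precedes it below -/
import Mathlib

section
/- For any (ε,δ)-differentially private mechanism M, the total variation distance between M(D₀) and M(D₁) for neighboring datasets D₀, D₁ is at most (e^ε − 1 + 2δ)/(e^ε + 1). -/
open MeasureTheory

/-! Write `p = P S`, `q = Q S` and `c = e^ε`. The DP inequality for `P` against `Q` on `S`,
`p ≤ c q + δ`, and for `Q` against `P` on `Sᶜ`, `1 - q ≤ c (1 - p) + δ`, add up to
`(c + 1)(p - q) ≤ c - 1 + 2δ`; swapping `P` and `Q` bounds `q - p` the same way. -/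

theorem measureReal_sub_le_of_dp {Θ : Type*} [MeasurableSpace Θ]
    {P Q : Measure Θ} [IsProbabilityMeasure P] [IsProbabilityMeasure Q]
    {S : Set Θ} (hS : MeasurableSet S) {ε δ : ℝ}
    (hS_le : P.real S ≤ Real.exp ε * Q.real S + δ)
    (hSc_le : Q.real Sᶜ ≤ Real.exp ε * P.real Sᶜ + δ) :
    P.real S - Q.real S ≤ (Real.exp ε - 1 + 2 * δ) / (Real.exp ε + 1) := by
  rw [probReal_compl_eq_one_sub hS, probReal_compl_eq_one_sub hS] at hSc_le
  rw [le_div_iff₀ (by positivity)]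
  linarith

theorem dp_implies_tv_bound_general {Θ : Type*} [MeasurableSpace Θ]
    (P Q : Measure Θ) [IsProbabilityMeasure P] [IsProbabilityMeasure Q]
    (ε δ : ℝ)
    (hDP : ∀ S : Set Θ, MeasurableSet S →
      (P S).toReal ≤ Real.exp ε * (Q S).toReal + δ ∧
      (Q S).toReal ≤ Real.exp ε * (P S).toReal + δ) :
    ∀ S : Set Θ, MeasurableSet S →
      |(P S).toReal - (Q S).toReal| ≤ (Real.exp ε - 1 + 2 * δ) / (Real.exp ε + 1) := by
  intro S hS
  obtain ⟨hPQ, hQP⟩ := hDP S hS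
  obtain ⟨hPQc, hQPc⟩ := hDP Sᶜ hS.compl
  exact abs_sub_le_iff.mpr
    ⟨measureReal_sub_le_of_dp hS hPQ hQPc, measureReal_sub_le_of_dp hS hQP hPQc⟩

/-- For any (ε,δ)-differentially private mechanism, the total variation
distance between the output distributions on neighboring datasets `P = M(D₀)` and
`Q = M(D₁)` is at most `(e^ε − 1 + 2δ)/(e^ε + 1)`. -/
theorem dp_implies_tv_bound {Θ : Type*} [MeasurableSpace Θ]
    (P Q : Measure Θ) [IsProbabilityMeasure P] [IsProbabilityMeasure Q]
    (ε δ : ℝ) (hε : 0 ≤ ε) (hδ : 0 ≤ δ)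
    (hDP : ∀ S : Set Θ, MeasurableSet S →
      (P S).toReal ≤ Real.exp ε * (Q S).toReal + δ ∧
      (Q S).toReal ≤ Real.exp ε * (P S).toReal + δ) :
    ∀ S : Set Θ, MeasurableSet S →
      |(P S).toReal - (Q S).toReal| ≤ (Real.exp ε - 1 + 2 * δ) / (Real.exp ε + 1) :=
  dp_implies_tv_bound_general P Q ε δ hDP
end

section
/- Let M be a mechanism with total variation at most Δ := TV(M), let π be a discrete prior on Z with collision probability κ_π = Σ_z π_z², and let A be any (randomized) attack taking the mechanism output and auxiliary information a(z). Then the η-reconstruction advantage of A, defined as Pr_{Z₁∼π, θ∼M(D_{Z₁})}[ℓ(Z₁, A(θ, a(Z₁))) ≤ η] − Pr_{Z₀,Z₁∼π, θ∼M(D_{Z₀})}[ℓ(Z₁, A(θ, a(Z₁))) ≤ η], is at most Δ·(1 − κ_π). -/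
open MeasureTheory
open scoped ENNReal

/-- Total variation bound on sets transfers to bounded functions, via layer cake. -/
private lemma tv_lintegral {Θ : Type*} [MeasurableSpace Θ] (μ ν : Measure Θ)
    [IsProbabilityMeasure μ] [IsProbabilityMeasure ν] {Δ : ℝ} (hΔ : 0 ≤ Δ)
    (h : ∀ S : Set Θ, MeasurableSet S → (μ S).toReal - (ν S).toReal ≤ Δ)
    {g : Θ → ℝ≥0∞} (hg : Measurable g) (hg1 : ∀ θ, g θ ≤ 1) :
    (∫⁻ θ, g θ ∂μ).toReal - (∫⁻ θ, g θ ∂ν).toReal ≤ Δ := by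
  set f : Θ → ℝ := fun θ => (g θ).toReal with hf
  have hgne : ∀ θ, g θ ≠ ⊤ := fun θ => ne_top_of_le_ne_top ENNReal.one_ne_top (hg1 θ)
  have hfm : Measurable f := hg.ennreal_toReal
  have hf1 : ∀ θ, f θ ≤ 1 := by
    intro θ
    have := ENNReal.toReal_mono ENNReal.one_ne_top (hg1 θ)
    simpa using this
  have hofReal : ∀ θ, ENNReal.ofReal (f θ) = g θ := fun θ => ENNReal.ofReal_toReal (hgne θ)
  have hlayer : ∀ κ : Measure Θ, ∫⁻ θ, g θ ∂κ = ∫⁻ t in Set.Ioi (0:ℝ), κ {a | t < f a} := by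
    intro κ
    rw [← lintegral_eq_lintegral_meas_lt κ (Filter.Eventually.of_forall fun θ => ENNReal.toReal_nonneg)
      hfm.aemeasurable]
    exact lintegral_congr fun θ => (hofReal θ).symm
  have hT1 : ∀ κ : Measure Θ, [IsProbabilityMeasure κ] → ∫⁻ t in Set.Ioi (1:ℝ), κ {a | t < f a} = 0 := by
    intro κ _
    have hz : ∀ t ∈ Set.Ioi (1:ℝ), κ {a | t < f a} = (fun _ : ℝ => (0:ℝ≥0∞)) t := by
      intro t ht
      have hempty : {a | t < f a} = ∅ := by
        ext a
        simp only [Set.mem_setOf_eq, Set.mem_empty_iff_false, iff_false, not_lt]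
        exact (hf1 a).trans (le_of_lt ht)
      simp [hempty]
    rw [setLIntegral_congr_fun measurableSet_Ioi hz]
    simp
  have hsplit : ∀ κ : Measure Θ, [IsProbabilityMeasure κ] →
      ∫⁻ θ, g θ ∂κ = ∫⁻ t in Set.Ioc (0:ℝ) 1, κ {a | t < f a} := by
    intro κ _
    rw [hlayer κ, ← Set.Ioc_union_Ioi_eq_Ioi (zero_le_one (α := ℝ)),
      lintegral_union measurableSet_Ioi Set.Ioc_disjoint_Ioi_same, hT1 κ, add_zero]
  have hpt : ∀ t : ℝ, μ {a | t < f a} ≤ ν {a | t < f a} + ENNReal.ofReal Δ := by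
    intro t
    have hms : MeasurableSet {a | t < f a} := measurableSet_lt measurable_const hfm
    have h1 := h _ hms
    have hμfin : μ {a | t < f a} ≠ ⊤ := measure_ne_top _ _
    have hνfin : ν {a | t < f a} ≠ ⊤ := measure_ne_top _ _
    calc μ {a | t < f a} = ENNReal.ofReal (μ {a | t < f a}).toReal := (ENNReal.ofReal_toReal hμfin).symm
      _ ≤ ENNReal.ofReal ((ν {a | t < f a}).toReal + Δ) := ENNReal.ofReal_le_ofReal (by linarith)
      _ = ν {a | t < f a} + ENNReal.ofReal Δ := by
          rw [ENNReal.ofReal_add ENNReal.toReal_nonneg hΔ, ENNReal.ofReal_toReal hνfin]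
  have key : ∫⁻ θ, g θ ∂μ ≤ ∫⁻ θ, g θ ∂ν + ENNReal.ofReal Δ := by
    rw [hsplit μ, hsplit ν]
    calc ∫⁻ t in Set.Ioc (0:ℝ) 1, μ {a | t < f a}
        ≤ ∫⁻ t in Set.Ioc (0:ℝ) 1, (ν {a | t < f a} + ENNReal.ofReal Δ) :=
          lintegral_mono fun t => hpt t
      _ = (∫⁻ t in Set.Ioc (0:ℝ) 1, ν {a | t < f a}) + ENNReal.ofReal Δ * volume (Set.Ioc (0:ℝ) 1) := by
          rw [lintegral_add_right _ measurable_const, lintegral_const, Measure.restrict_apply_univ]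
      _ = (∫⁻ t in Set.Ioc (0:ℝ) 1, ν {a | t < f a}) + ENNReal.ofReal Δ := by
          simp [Real.volume_Ioc]
  have hνle : ∫⁻ θ, g θ ∂ν ≤ 1 := by
    calc ∫⁻ θ, g θ ∂ν ≤ ∫⁻ _, 1 ∂ν := lintegral_mono hg1
      _ = 1 := by simp
  have hfin : ∫⁻ θ, g θ ∂ν + ENNReal.ofReal Δ ≠ ⊤ :=
    ENNReal.add_ne_top.mpr ⟨ne_top_of_le_ne_top ENNReal.one_ne_top hνle, ENNReal.ofReal_ne_top⟩
  have := ENNReal.toReal_mono hfin key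
  rw [ENNReal.toReal_add (ne_top_of_le_ne_top ENNReal.one_ne_top hνle) ENNReal.ofReal_ne_top,
    ENNReal.toReal_ofReal hΔ] at this
  linarith

/-- Let `M` be a mechanism with total variation at most `Δ`, `π` a discrete
prior with collision probability `κ_π = Σ_z π_z²`, and `A` any randomized attack taking the
mechanism output and auxiliary information `a z`.  Then the η-reconstruction advantage
`Pr_{Z₁∼π, θ∼M(D_{Z₁})}[ℓ(Z₁, A(θ, a Z₁)) ≤ η] −
 Pr_{Z₀,Z₁∼π, θ∼M(D_{Z₀})}[ℓ(Z₁, A(θ, a Z₁)) ≤ η]`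
is at most `Δ · (1 − κ_π)`.  Here `M z` denotes the output distribution of the mechanism on the
dataset `D_z` obtained by adding record `z` to the fixed dataset `D₋`. -/
theorem rad_le_tv_mul_one_sub_collision {Z Θ aux : Type*} [Countable Z] [MeasurableSpace Θ]
    (π : PMF Z) (M : Z → Measure Θ) (hprob : ∀ z, IsProbabilityMeasure (M z))
    (Δ : ℝ)
    (hTV : ∀ z z' : Z, ∀ S : Set Θ, MeasurableSet S →
      |((M z) S).toReal - ((M z') S).toReal| ≤ Δ)
    (ℓ : Z → Z → ℝ) (η : ℝ) (hη : 0 ≤ η) (a : Z → aux)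
    (A : Θ → aux → PMF Z)
    (hA : ∀ (x : aux) (z : Z), Measurable fun θ => A θ x z) :
    (∑' z₁ : Z, π z₁ *
        ∫⁻ θ, (∑' zg : Z, Set.indicator {w : Z | ℓ z₁ w ≤ η} (fun w => A θ (a z₁) w) zg)
          ∂(M z₁)).toReal -
      (∑' z₁ : Z, ∑' z₀ : Z, π z₁ * π z₀ *
        ∫⁻ θ, (∑' zg : Z, Set.indicator {w : Z | ℓ z₁ w ≤ η} (fun w => A θ (a z₁) w) zg)
          ∂(M z₀)).toReal ≤
      Δ * (1 - ∑' z : Z, ((π z).toReal) ^ 2) := by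
  classical
  haveI := hprob
  -- basic facts
  have hnonempty : Nonempty Z := by
    by_contra h
    rw [not_nonempty_iff] at h
    have := π.tsum_coe
    simp [tsum_eq_zero_of_not_summable] at this
  have hΔ : 0 ≤ Δ := by
    have := hTV (Classical.arbitrary Z) (Classical.arbitrary Z) ∅ MeasurableSet.empty
    simpa using this
  set G : Z → Θ → ℝ≥0∞ := fun z₁ θ =>
    ∑' zg : Z, Set.indicator {w : Z | ℓ z₁ w ≤ η} (fun w => A θ (a z₁) w) zg with hG
  have hGm : ∀ z₁, Measurable (G z₁) := by
    intro z₁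
    apply Measurable.ennreal_tsum
    intro zg
    by_cases hzg : zg ∈ {w : Z | ℓ z₁ w ≤ η}
    · simpa [Set.indicator_of_mem hzg] using hA (a z₁) zg
    · simp [Set.indicator_of_notMem hzg]
  have hG1 : ∀ z₁ θ, G z₁ θ ≤ 1 := by
    intro z₁ θ
    calc G z₁ θ ≤ ∑' zg : Z, A θ (a z₁) zg :=
          ENNReal.tsum_le_tsum fun zg => Set.indicator_le_self _ _ zg
      _ = 1 := (A θ (a z₁)).tsum_coe
  set F : Z → Z → ℝ≥0∞ := fun z₁ z₀ => ∫⁻ θ, G z₁ θ ∂(M z₀) with hFdef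
  have hF1 : ∀ z₁ z₀, F z₁ z₀ ≤ 1 := by
    intro z₁ z₀
    calc F z₁ z₀ ≤ ∫⁻ _, 1 ∂(M z₀) := lintegral_mono (hG1 z₁)
      _ = 1 := by simp
  have hFne : ∀ z₁ z₀, F z₁ z₀ ≠ ⊤ := fun z₁ z₀ =>
    ne_top_of_le_ne_top ENNReal.one_ne_top (hF1 z₁ z₀)
  set p : Z → ℝ := fun z => (π z).toReal with hp
  set f : Z → Z → ℝ := fun z₁ z₀ => (F z₁ z₀).toReal with hfdef
  have hπne : ∀ z, π z ≠ ⊤ := fun z => ne_top_of_le_ne_top ENNReal.one_ne_top (π.coe_le_one z)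
  have hp0 : ∀ z, 0 ≤ p z := fun z => ENNReal.toReal_nonneg
  have hp1 : ∀ z, p z ≤ 1 := by
    intro z; simpa using ENNReal.toReal_mono ENNReal.one_ne_top (π.coe_le_one z)
  have hpsum : Summable p := ENNReal.summable_toReal (by rw [π.tsum_coe]; exact ENNReal.one_ne_top)
  have hptsum : ∑' z, p z = 1 := by
    rw [hp, ← ENNReal.tsum_toReal_eq hπne, π.tsum_coe, ENNReal.toReal_one]
  have hf0 : ∀ z₁ z₀, 0 ≤ f z₁ z₀ := fun _ _ => ENNReal.toReal_nonneg
  have hf1 : ∀ z₁ z₀, f z₁ z₀ ≤ 1 := by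
    intro z₁ z₀; simpa using ENNReal.toReal_mono ENNReal.one_ne_top (hF1 z₁ z₀)
  -- TV bound on f
  have hfTV : ∀ z₁ z₀, f z₁ z₁ - f z₁ z₀ ≤ Δ := by
    intro z₁ z₀
    exact tv_lintegral (M z₁) (M z₀) hΔ
      (fun S hS => (abs_le.mp (hTV z₁ z₀ S hS)).2) (hGm z₁) (hG1 z₁)
  -- rewrite goal in real tsums
  have hT1 : (∑' z₁ : Z, π z₁ * F z₁ z₁).toReal = ∑' z₁, p z₁ * f z₁ z₁ := by
    rw [ENNReal.tsum_toReal_eq fun z => ENNReal.mul_ne_top (hπne z) (hFne z z)]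
    exact tsum_congr fun z => ENNReal.toReal_mul
  have hinner_le : ∀ z₁, ∑' z₀ : Z, π z₁ * π z₀ * F z₁ z₀ ≤ 1 := by
    intro z₁
    calc ∑' z₀ : Z, π z₁ * π z₀ * F z₁ z₀ ≤ ∑' z₀ : Z, π z₀ := by
          refine ENNReal.tsum_le_tsum fun z₀ => ?_
          calc π z₁ * π z₀ * F z₁ z₀ ≤ 1 * π z₀ * 1 :=
                mul_le_mul' (mul_le_mul' (π.coe_le_one z₁) le_rfl) (hF1 z₁ z₀)
            _ = π z₀ := by ring
      _ = 1 := π.tsum_coe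
  have hT2 : (∑' z₁ : Z, ∑' z₀ : Z, π z₁ * π z₀ * F z₁ z₀).toReal =
      ∑' z₁ : Z, ∑' z₀ : Z, p z₁ * p z₀ * f z₁ z₀ := by
    rw [ENNReal.tsum_toReal_eq fun z₁ =>
      ne_top_of_le_ne_top ENNReal.one_ne_top (hinner_le z₁)]
    refine tsum_congr fun z₁ => ?_
    rw [ENNReal.tsum_toReal_eq fun z₀ =>
      ENNReal.mul_ne_top (ENNReal.mul_ne_top (hπne z₁) (hπne z₀)) (hFne z₁ z₀)]
    exact tsum_congr fun z₀ => by rw [ENNReal.toReal_mul, ENNReal.toReal_mul]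
  rw [hT1, hT2]
  -- summability facts
  have hpsq : Summable fun z => p z ^ 2 := by
    refine Summable.of_nonneg_of_le (fun z => sq_nonneg _) (fun z => ?_) hpsum
    calc p z ^ 2 = p z * p z := sq (p z)
      _ ≤ 1 * p z := mul_le_mul_of_nonneg_right (hp1 z) (hp0 z)
      _ = p z := one_mul _
  have hS1 : Summable fun z₁ => p z₁ * f z₁ z₁ := by
    refine Summable.of_nonneg_of_le (fun z => mul_nonneg (hp0 z) (hf0 z z)) (fun z => ?_) hpsum
    calc p z * f z z ≤ p z * 1 := mul_le_mul_of_nonneg_left (hf1 z z) (hp0 z)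
      _ = p z := mul_one _
  have hinner : ∀ z₁, Summable fun z₀ => p z₀ * f z₁ z₀ := by
    intro z₁
    refine Summable.of_nonneg_of_le (fun z => mul_nonneg (hp0 z) (hf0 z₁ z)) (fun z => ?_) hpsum
    calc p z * f z₁ z ≤ p z * 1 := mul_le_mul_of_nonneg_left (hf1 z₁ z) (hp0 z)
      _ = p z := mul_one _
  have hinner_tsum_le : ∀ z₁, ∑' z₀, p z₀ * f z₁ z₀ ≤ 1 := by
    intro z₁
    calc ∑' z₀, p z₀ * f z₁ z₀ ≤ ∑' z₀, p z₀ := by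
          refine Summable.tsum_le_tsum (fun z => ?_) (hinner z₁) hpsum
          calc p z * f z₁ z ≤ p z * 1 := mul_le_mul_of_nonneg_left (hf1 z₁ z) (hp0 z)
            _ = p z := mul_one _
      _ = 1 := hptsum
  have hinner_tsum_nonneg : ∀ z₁, 0 ≤ ∑' z₀, p z₀ * f z₁ z₀ := fun z₁ =>
    tsum_nonneg fun z => mul_nonneg (hp0 z) (hf0 z₁ z)
  have hS2eq : ∀ z₁, (∑' z₀, p z₁ * p z₀ * f z₁ z₀) = p z₁ * ∑' z₀, p z₀ * f z₁ z₀ := by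
    intro z₁
    rw [← tsum_mul_left]
    exact tsum_congr fun z₀ => by ring
  have hS2 : Summable fun z₁ => ∑' z₀, p z₁ * p z₀ * f z₁ z₀ := by
    refine Summable.of_nonneg_of_le (fun z₁ => ?_) (fun z₁ => ?_) hpsum
    · rw [hS2eq z₁]; exact mul_nonneg (hp0 z₁) (hinner_tsum_nonneg z₁)
    · rw [hS2eq z₁]
      calc p z₁ * ∑' z₀, p z₀ * f z₁ z₀ ≤ p z₁ * 1 :=
            mul_le_mul_of_nonneg_left (hinner_tsum_le z₁) (hp0 z₁)
        _ = p z₁ := mul_one _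
  -- pointwise bound
  have hkey : ∀ z₁, p z₁ * f z₁ z₁ - (∑' z₀, p z₁ * p z₀ * f z₁ z₀) ≤ Δ * (p z₁ - p z₁ ^ 2) := by
    intro z₁
    rw [hS2eq z₁]
    have hdiff : f z₁ z₁ - ∑' z₀, p z₀ * f z₁ z₀ = ∑' z₀, p z₀ * (f z₁ z₁ - f z₁ z₀) := by
      have : (fun z₀ => p z₀ * (f z₁ z₁ - f z₁ z₀)) =
          fun z₀ => p z₀ * f z₁ z₁ - p z₀ * f z₁ z₀ := by
        funext z₀; ring
      rw [this, Summable.tsum_sub (hpsum.mul_right _) (hinner z₁), tsum_mul_right, hptsum, one_mul]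
    have hb : ∑' z₀, p z₀ * (f z₁ z₁ - f z₁ z₀) ≤ Δ * (1 - p z₁) := by
      have hbsum : Summable fun z₀ => p z₀ * (if z₀ = z₁ then 0 else Δ) := by
        refine Summable.of_nonneg_of_le (fun z => ?_) (fun z => ?_) (hpsum.mul_right Δ)
        · exact mul_nonneg (hp0 z) (by split <;> [rfl; exact hΔ])
        · exact mul_le_mul_of_nonneg_left (by split <;> [exact hΔ; rfl]) (hp0 z)
      have hLsum : Summable fun z₀ => p z₀ * (f z₁ z₁ - f z₁ z₀) := by
        have : (fun z₀ => p z₀ * (f z₁ z₁ - f z₁ z₀)) =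
            fun z₀ => p z₀ * f z₁ z₁ - p z₀ * f z₁ z₀ := by funext z₀; ring
        rw [this]; exact (hpsum.mul_right _).sub (hinner z₁)
      have hle : ∑' z₀, p z₀ * (f z₁ z₁ - f z₁ z₀) ≤
          ∑' z₀, p z₀ * (if z₀ = z₁ then 0 else Δ) := by
        refine Summable.tsum_le_tsum (fun z₀ => ?_) hLsum hbsum
        by_cases hz : z₀ = z₁
        · subst hz; simp
        · simp only [if_neg hz]
          exact mul_le_mul_of_nonneg_left (hfTV z₁ z₀) (hp0 z₀)
      have hbval : ∑' z₀, p z₀ * (if z₀ = z₁ then 0 else Δ) = Δ * (1 - p z₁) := by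
        have heq : (fun z₀ => p z₀ * (if z₀ = z₁ then 0 else Δ)) =
            fun z₀ => Δ * p z₀ - (if z₀ = z₁ then Δ * p z₁ else 0) := by
          funext z₀
          by_cases hz : z₀ = z₁
          · subst hz; simp
          · simp [hz]; ring
        rw [heq, Summable.tsum_sub (hpsum.mul_left Δ) ((hasSum_ite_eq z₁ (Δ * p z₁)).summable), tsum_mul_left, hptsum,
          tsum_ite_eq z₁ (fun _ => Δ * p z₁)]
        ring
      rw [← hbval]; exact hle
    calc p z₁ * f z₁ z₁ - p z₁ * ∑' z₀, p z₀ * f z₁ z₀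
        = p z₁ * (f z₁ z₁ - ∑' z₀, p z₀ * f z₁ z₀) := by ring
      _ = p z₁ * ∑' z₀, p z₀ * (f z₁ z₁ - f z₁ z₀) := by rw [hdiff]
      _ ≤ p z₁ * (Δ * (1 - p z₁)) := mul_le_mul_of_nonneg_left hb (hp0 z₁)
      _ = Δ * (p z₁ - p z₁ ^ 2) := by ring
  -- assemble
  have hsub : (∑' z₁, p z₁ * f z₁ z₁) - (∑' z₁, ∑' z₀, p z₁ * p z₀ * f z₁ z₀) =
      ∑' z₁, (p z₁ * f z₁ z₁ - ∑' z₀, p z₁ * p z₀ * f z₁ z₀) := (Summable.tsum_sub hS1 hS2).symm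
  rw [hsub]
  have hbsum2 : Summable fun z₁ => Δ * (p z₁ - p z₁ ^ 2) := ((hpsum.sub hpsq).mul_left Δ)
  calc (∑' z₁, (p z₁ * f z₁ z₁ - ∑' z₀, p z₁ * p z₀ * f z₁ z₀))
      ≤ ∑' z₁, Δ * (p z₁ - p z₁ ^ 2) := Summable.tsum_le_tsum hkey (hS1.sub hS2) hbsum2
    _ = Δ * (1 - ∑' z, p z ^ 2) := by
        rw [tsum_mul_left, Summable.tsum_sub hpsum hpsq, hptsum]
end

section
/- For the optimal unary encoding mechanism with parameters p = e^ε/(e^ε+1) and q = 1/(e^ε+1) on an m-element domain, the sum over binary vectors θ ∈ {0,1}^m of ((p−q)/2)·q^{k_θ−1}·p^{m−k_θ−1} · Σ_{x:θ_x=1} π_x (1 − Σ_{x':θ_{x'}=1} π_{x'}) equals ((p−q)/2)·(1 − κ_π), where k_θ is the number of ones in θ and κ_π = Σ_x π_x². Consequently the membership advantage of OUE is bounded by (1/2)·((e^ε−1)/(e^ε+1))·(1 − κ_π). -/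
open Finset

private lemma binom_aux (m : ℕ) (hm : 2 ≤ m) (p q : ℝ) (hpq : q + p = 1) (x x' : Fin m) (hx : x ≠ x') :
    (∑ θ : Finset (Fin m), if x ∈ θ ∧ x' ∉ θ then
        q ^ (θ.card - 1) * p ^ (m - θ.card - 1) else 0) = 1 := by
  classical
  rw [← Finset.sum_filter]
  set U : Finset (Fin m) := (Finset.univ.erase x').erase x with hU
  have hxU : x ∉ U := Finset.notMem_erase _ _
  have hx'U : x' ∉ U := fun h => (Finset.mem_erase.mp (Finset.mem_of_mem_erase h)).1 rfl
  have hcardU : U.card = m - 2 := by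
    rw [hU, Finset.card_erase_of_mem (Finset.mem_erase.mpr ⟨hx, Finset.mem_univ x⟩),
      Finset.card_erase_of_mem (Finset.mem_univ x'), Finset.card_univ, Fintype.card_fin]
    omega
  have key : ∑ θ ∈ Finset.univ.filter (fun θ : Finset (Fin m) => x ∈ θ ∧ x' ∉ θ),
      q ^ (θ.card - 1) * p ^ (m - θ.card - 1)
      = ∑ T ∈ U.powerset, q ^ T.card * p ^ (U \ T).card := by
    refine Finset.sum_bij' (fun θ _ => θ.erase x) (fun T _ => insert x T) ?_ ?_ ?_ ?_ ?_
    · intro θ hθ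
      simp only [Finset.mem_filter, Finset.mem_univ, true_and] at hθ
      rw [Finset.mem_powerset]
      intro y hy
      have hyx := Finset.mem_erase.mp hy
      refine Finset.mem_erase.mpr ⟨hyx.1, Finset.mem_erase.mpr ⟨?_, Finset.mem_univ y⟩⟩
      rintro rfl; exact hθ.2 hyx.2
    · intro T hT
      rw [Finset.mem_powerset] at hT
      simp only [Finset.mem_filter, Finset.mem_univ, true_and]
      refine ⟨Finset.mem_insert_self x T, ?_⟩
      intro h
      rcases Finset.mem_insert.mp h with h | h
      · exact hx h.symm
      · exact hx'U (hT h)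
    · intro θ hθ
      simp only [Finset.mem_filter, Finset.mem_univ, true_and] at hθ
      exact Finset.insert_erase hθ.1
    · intro T hT
      rw [Finset.mem_powerset] at hT
      exact Finset.erase_insert (fun h => hxU (hT h))
    · intro θ hθ
      simp only [Finset.mem_filter, Finset.mem_univ, true_and] at hθ
      have hθcard : 1 ≤ θ.card := Finset.card_pos.mpr ⟨x, hθ.1⟩
      have hθle : θ.card ≤ m := by
        simpa using Finset.card_le_card (Finset.subset_univ θ)
      have hsub : θ.erase x ⊆ U := by
        intro y hy
        have hyx := Finset.mem_erase.mp hy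
        refine Finset.mem_erase.mpr ⟨hyx.1, Finset.mem_erase.mpr ⟨?_, Finset.mem_univ y⟩⟩
        rintro rfl; exact hθ.2 hyx.2
      have e1 : (θ.erase x).card = θ.card - 1 := Finset.card_erase_of_mem hθ.1
      have e2 : (U \ θ.erase x).card = m - θ.card - 1 := by
        rw [Finset.card_sdiff_of_subset hsub, hcardU, e1]; omega
      rw [e1, e2]
  rw [key]
  have h := Finset.prod_add (fun _ => q) (fun _ => p) U
  simp only [Finset.prod_const, hpq, Finset.prod_const_one] at h
  rw [← h]
  simp [hpq]

private lemma main_aux (m : ℕ) (hm : 2 ≤ m) (p q : ℝ) (hpq : q + p = 1)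
    (π : Fin m → ℝ) (hsum : ∑ x, π x = 1) :
    (∑ θ : Finset (Fin m), q ^ (θ.card - 1) * p ^ (m - θ.card - 1) *
        ((∑ x ∈ θ, π x) * (1 - ∑ x ∈ θ, π x))) = 1 - ∑ x, (π x) ^ 2 := by
  classical
  have step : ∀ θ : Finset (Fin m),
      q ^ (θ.card - 1) * p ^ (m - θ.card - 1) * ((∑ x ∈ θ, π x) * (1 - ∑ x ∈ θ, π x))
      = ∑ x, ∑ x', (if x ∈ θ ∧ x' ∉ θ then
          (q ^ (θ.card - 1) * p ^ (m - θ.card - 1)) * (π x * π x') else 0) := by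
    intro θ
    have hcompl : (1 - ∑ x ∈ θ, π x) = ∑ x ∈ θᶜ, π x := by
      have h := Finset.sum_add_sum_compl θ π
      rw [hsum] at h; linarith
    have hR : ∀ x : Fin m, (∑ x', if x ∈ θ ∧ x' ∉ θ then
        (q ^ (θ.card - 1) * p ^ (m - θ.card - 1)) * (π x * π x') else 0)
        = if x ∈ θ then ∑ x' ∈ θᶜ, (q ^ (θ.card - 1) * p ^ (m - θ.card - 1)) * (π x * π x') else 0 := by
      intro x
      by_cases hx : x ∈ θ
      · simp only [hx, true_and, if_true]
        rw [← Finset.sum_filter]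
        congr 1
        ext y
        simp [Finset.mem_compl]
      · simp [hx]
    rw [Finset.sum_congr rfl fun x _ => hR x, ← Finset.sum_filter]
    have hfil : Finset.univ.filter (fun x => x ∈ θ) = θ := by
      ext y; simp
    rw [hfil, hcompl, Finset.sum_mul_sum, Finset.mul_sum]
    refine Finset.sum_congr rfl fun x _ => ?_
    rw [Finset.mul_sum]
  rw [Finset.sum_congr rfl fun θ _ => step θ]
  rw [Finset.sum_comm]
  have swap2 : ∀ x : Fin m, (∑ θ : Finset (Fin m), ∑ x', (if x ∈ θ ∧ x' ∉ θ then
      (q ^ (θ.card - 1) * p ^ (m - θ.card - 1)) * (π x * π x') else 0))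
      = ∑ x', ∑ θ : Finset (Fin m), (if x ∈ θ ∧ x' ∉ θ then
      (q ^ (θ.card - 1) * p ^ (m - θ.card - 1)) * (π x * π x') else 0) :=
    fun x => Finset.sum_comm
  rw [Finset.sum_congr rfl fun x _ => swap2 x]
  have inner : ∀ x x' : Fin m, (∑ θ : Finset (Fin m), (if x ∈ θ ∧ x' ∉ θ then
      (q ^ (θ.card - 1) * p ^ (m - θ.card - 1)) * (π x * π x') else 0))
      = if x = x' then 0 else π x * π x' := by
    intro x x'
    by_cases hxx : x = x'
    · subst hxx
      simp only [if_pos rfl]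
      apply Finset.sum_eq_zero
      intro θ _
      rw [if_neg]
      rintro ⟨h1, h2⟩; exact h2 h1
    · rw [if_neg hxx]
      have : ∀ θ : Finset (Fin m), (if x ∈ θ ∧ x' ∉ θ then
          (q ^ (θ.card - 1) * p ^ (m - θ.card - 1)) * (π x * π x') else 0)
          = (π x * π x') * (if x ∈ θ ∧ x' ∉ θ then
          q ^ (θ.card - 1) * p ^ (m - θ.card - 1) else 0) := by
        intro θ; by_cases h : x ∈ θ ∧ x' ∉ θ <;> simp [h] <;> ring
      rw [Finset.sum_congr rfl fun θ _ => this θ, ← Finset.mul_sum,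
        binom_aux m hm p q hpq x x' hxx, mul_one]
  rw [Finset.sum_congr rfl fun x _ => Finset.sum_congr rfl fun x' _ => inner x x']
  have last : ∀ x : Fin m, (∑ x', if x = x' then 0 else π x * π x') = π x - π x ^ 2 := by
    intro x
    have h1 : (∑ x', if x = x' then 0 else π x * π x')
        = (∑ x' : Fin m, π x * π x') - (∑ x', if x = x' then π x * π x' else 0) := by
      rw [← Finset.sum_sub_distrib]
      refine Finset.sum_congr rfl fun x' _ => ?_
      by_cases h : x = x' <;> simp [h]
    rw [h1, ← Finset.mul_sum, hsum, mul_one, Finset.sum_ite_eq, if_pos (Finset.mem_univ x)]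
    ring
  rw [Finset.sum_congr rfl fun x _ => last x, Finset.sum_sub_distrib, hsum]

/-- For the optimal unary encoding mechanism with `p = e^ε/(e^ε+1)` and
`q = 1/(e^ε+1)` on an `m`-element domain, the sum over binary vectors `θ` (encoded as the
set of positions carrying a one, with `k_θ` ones) of
`((p−q)/2)·q^{k_θ−1}·p^{m−k_θ−1} · Σ_{x:θ_x=1} π_x (1 − Σ_{x':θ_{x'}=1} π_{x'})`
equals `((p−q)/2)·(1 − κ_π)` where `κ_π = Σ_x π_x²`.  Consequently the membership advantage of
OUE is bounded by `(1/2)·((e^ε−1)/(e^ε+1))·(1 − κ_π)`. -/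
theorem oue_advantage_identity (m : ℕ) (hm : 2 ≤ m) (ε : ℝ)
    (π : Fin m → ℝ) (hπ : ∀ x, 0 ≤ π x) (hsum : ∑ x, π x = 1) :
    let q : ℝ := 1 / (Real.exp ε + 1)
    let p : ℝ := 1 - q
    (∑ θ : Finset (Fin m),
        ((p - q) / 2) * q ^ (θ.card - 1) * p ^ (m - θ.card - 1) *
          ((∑ x ∈ θ, π x) * (1 - ∑ x ∈ θ, π x))) =
      ((p - q) / 2) * (1 - ∑ x, (π x) ^ 2) ∧
    (∑ θ : Finset (Fin m),
        ((p - q) / 2) * q ^ (θ.card - 1) * p ^ (m - θ.card - 1) *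
          ((∑ x ∈ θ, π x) * (1 - ∑ x ∈ θ, π x))) ≤
      (1 / 2) * ((Real.exp ε - 1) / (Real.exp ε + 1)) * (1 - ∑ x, (π x) ^ 2) := by
  intro q p
  have hpq : q + p = 1 := by show q + (1 - q) = 1; ring
  have heq1 : (∑ θ : Finset (Fin m),
      ((p - q) / 2) * q ^ (θ.card - 1) * p ^ (m - θ.card - 1) *
        ((∑ x ∈ θ, π x) * (1 - ∑ x ∈ θ, π x))) =
      ((p - q) / 2) * (1 - ∑ x, (π x) ^ 2) := by
    have := main_aux m hm p q hpq π hsum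
    calc (∑ θ : Finset (Fin m),
        ((p - q) / 2) * q ^ (θ.card - 1) * p ^ (m - θ.card - 1) *
          ((∑ x ∈ θ, π x) * (1 - ∑ x ∈ θ, π x)))
        = ((p - q) / 2) * ∑ θ : Finset (Fin m),
          q ^ (θ.card - 1) * p ^ (m - θ.card - 1) *
          ((∑ x ∈ θ, π x) * (1 - ∑ x ∈ θ, π x)) := by
          rw [Finset.mul_sum]; exact Finset.sum_congr rfl fun θ _ => by ring
      _ = ((p - q) / 2) * (1 - ∑ x, (π x) ^ 2) := by rw [this]
  refine ⟨heq1, ?_⟩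
  rw [heq1]
  have hE : Real.exp ε + 1 ≠ 0 := by positivity
  have hd : p - q = (Real.exp ε - 1) / (Real.exp ε + 1) := by
    show (1 - 1 / (Real.exp ε + 1)) - 1 / (Real.exp ε + 1) = _
    field_simp
    ring
  rw [hd]
  apply le_of_eq
  ring
end

section
/- For the optimal unary encoding mechanism with uniform prior on m elements, the 0-reconstruction advantage without auxiliary knowledge is bounded by ((2p−1)(1 − p^{m−1}))/(2m(1−p)) where p = e^ε/(e^ε+1); and this bound converges to (m−1)/(2m) as ε → ∞. -/
open Filter

/-- Probability that OUE keeps/flips a bit: `p = e^ε/(e^ε+1)`. -/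
noncomputable def oueP (ε : ℝ) : ℝ := Real.exp ε / (Real.exp ε + 1)

/-- Output distribution of the optimal unary encoding mechanism: on input `z : Fin m` it
outputs the set `θ` of positions reporting a one, where the true position reports `1` with
probability `1/2` and every other position reports `1` with probability `q = 1 - p`. -/
noncomputable def oueProb (m : ℕ) (ε : ℝ) (z : Fin m) (θ : Finset (Fin m)) : ℝ :=
  if z ∈ θ then (1 / 2) * (1 - oueP ε) ^ (θ.card - 1) * oueP ε ^ (m - θ.card)
  else (1 / 2) * (1 - oueP ε) ^ θ.card * oueP ε ^ (m - θ.card - 1)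

/-- Closed-form bound `((2p−1)(1 − p^{m−1}))/(2m(1−p))` on the `0`-reconstruction advantage
of OUE under the uniform prior. -/
noncomputable def oueBound (m : ℕ) (ε : ℝ) : ℝ :=
  ((2 * oueP ε - 1) * (1 - oueP ε ^ (m - 1))) / (2 * m * (1 - oueP ε))

lemma oueP_pos (ε : ℝ) : 0 < oueP ε := by
  have h := Real.exp_pos ε
  exact div_pos h (by linarith)

lemma oueP_lt_one (ε : ℝ) : oueP ε < 1 := by
  have h := Real.exp_pos ε
  rw [oueP, div_lt_one (by linarith)]; linarith

lemma oueP_half (ε : ℝ) (hε : 0 ≤ ε) : 1/2 ≤ oueP ε := by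
  have h := Real.exp_pos ε
  have h1 : 1 ≤ Real.exp ε := Real.one_le_exp hε
  rw [oueP, le_div_iff₀ (by linarith)]; linarith

lemma binom_tail (n : ℕ) (p q : ℝ) (h : q + p = 1) :
    ∑ j ∈ Finset.range n, ((n.choose (j+1)):ℝ) * q^(j+1) * p^(n-(j+1)) = 1 - p^n := by
  have hb := add_pow q p n
  rw [h, one_pow, Finset.sum_range_succ'] at hb
  simp only [pow_zero, Nat.choose_zero_right, Nat.cast_one, one_mul, mul_one, Nat.sub_zero] at hb
  have : ∑ j ∈ Finset.range n, ((n.choose (j+1)):ℝ) * q^(j+1) * p^(n-(j+1))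
      = ∑ j ∈ Finset.range n, q ^ (j+1) * p ^ (n - (j+1)) * ↑(n.choose (j+1)) := by
    exact Finset.sum_congr rfl fun j _ => by ring
  rw [this]
  linarith

lemma sum_B (m : ℕ) (hm : 2 ≤ m) (p : ℝ) (hp1 : p ≠ 1) :
    ∑ θ : Finset (Fin m), (if θ.card = 0 then (0:ℝ) else
      ((m:ℝ) - θ.card)/(m:ℝ)^2 * ((p - (1-p))/2 * (1-p)^(θ.card-1) * p^(m-θ.card-1)))
    = ((2*p - 1) * (1 - p^(m-1))) / (2*m*(1-p)) := by
  set q : ℝ := 1 - p with hq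
  have hqne : q ≠ 0 := sub_ne_zero.mpr (Ne.symm hp1)
  have hm0 : (m:ℝ) ≠ 0 := by positivity
  set g : ℕ → ℝ := fun k => if k = 0 then (0:ℝ) else
      ((m:ℝ) - k)/(m:ℝ)^2 * ((p - q)/2 * q^(k-1) * p^(m-k-1)) with hg
  -- step 1: reduce to sum over cards
  have h1 : ∑ θ : Finset (Fin m), g θ.card
      = ∑ j ∈ Finset.range (m+1), ((m.choose j : ℝ) * g j) := by
    rw [← Finset.powerset_univ, Finset.sum_powerset]
    simp only [Finset.card_univ, Fintype.card_fin]
    refine Finset.sum_congr rfl fun j _ => ?_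
    have hc : ∀ θ ∈ Finset.powersetCard j (Finset.univ : Finset (Fin m)), g θ.card = g j :=
      fun θ hθ => by rw [(Finset.mem_powersetCard.mp hθ).2]
    rw [Finset.sum_congr rfl hc, Finset.sum_const, Finset.card_powersetCard,
      Finset.card_univ, Fintype.card_fin, nsmul_eq_mul]
  have h2 : ∑ j ∈ Finset.range (m+1), ((m.choose j : ℝ) * g j)
      = ∑ j ∈ Finset.range m, ((m.choose (j+1) : ℝ) * g (j+1)) := by
    rw [Finset.sum_range_succ']
    simp [hg]
  have hterm : ∀ j ∈ Finset.range m, ((m.choose (j+1) : ℝ) * g (j+1))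
      = (p-q)/(2*m) * (((m-1).choose (j+1) : ℝ) * q^j * p^((m-1)-(j+1))) := by
    intro j hj
    have hjm : j + 1 ≤ m := Finset.mem_range.mp hj
    have hm1 : m - 1 + 1 = m := by omega
    have hcn := Nat.choose_mul_succ_eq (m-1) (j+1)
    rw [hm1] at hcn
    have hcc : ((m-1).choose (j+1) : ℝ) * m = (m.choose (j+1) : ℝ) * ((m:ℝ) - (j+1)) := by
      have := congrArg (Nat.cast : ℕ → ℝ) hcn
      push_cast [Nat.cast_sub hjm] at this
      linarith [this]
    have hE : m - (j+1) - 1 = (m-1) - (j+1) := by omega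
    have hgv : g (j+1) = ((m:ℝ) - (j+1))/(m:ℝ)^2 * ((p - q)/2 * q^j * p^((m-1)-(j+1))) := by
      simp only [hg, Nat.add_sub_cancel, hE]
      norm_num
    rw [hgv]
    have hinv : (m:ℝ) * (m:ℝ)⁻¹ = 1 := mul_inv_cancel₀ hm0
    linear_combination (-((p-q)/2 * q^j * p^((m-1)-(j+1)))/(m:ℝ)^2) * hcc
      + ((m:ℝ)⁻¹ * (p - 1/2) * (((m-1).choose (j+1)):ℝ) * p^((m-1)-(j+1)) * (1-p)^j) * hinv
  have h3 : ∑ j ∈ Finset.range m, ((m.choose (j+1) : ℝ) * g (j+1))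
      = (p-q)/(2*m) * ∑ j ∈ Finset.range m,
          (((m-1).choose (j+1) : ℝ) * q^j * p^((m-1)-(j+1))) := by
    rw [Finset.mul_sum]; exact Finset.sum_congr rfl hterm
  have hrange : ∑ j ∈ Finset.range m, (((m-1).choose (j+1) : ℝ) * q^j * p^((m-1)-(j+1)))
      = ∑ j ∈ Finset.range (m-1), (((m-1).choose (j+1) : ℝ) * q^j * p^((m-1)-(j+1))) := by
    have e : m = (m-1)+1 := by omega
    rw [e, Finset.sum_range_succ, Nat.add_sub_cancel]
    simp [Nat.choose_succ_self]
  have hbt := binom_tail (m-1) p q (by rw [hq]; ring)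
  have hqT : q * (∑ j ∈ Finset.range (m-1), (((m-1).choose (j+1):ℝ) * q^j * p^((m-1)-(j+1))))
      = 1 - p^(m-1) := by
    rw [Finset.mul_sum, ← hbt]
    exact Finset.sum_congr rfl fun j _ => by ring
  have hgoal : ∀ θ : Finset (Fin m), (if θ.card = 0 then (0:ℝ) else
      ((m:ℝ) - θ.card)/(m:ℝ)^2 * ((p - q)/2 * q^(θ.card-1) * p^(m-θ.card-1))) = g θ.card :=
    fun θ => rfl
  rw [Finset.sum_congr rfl (fun θ _ => hgoal θ), h1, h2, h3, hrange, ← hqT]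
  have hpq : p - q = 2*p - 1 := by rw [hq]; ring
  rw [hpq]
  field_simp

lemma sum_oueProb (m : ℕ) (ε : ℝ) (θ : Finset (Fin m)) :
    ∑ z₀ : Fin m, oueProb m ε z₀ θ =
      (θ.card : ℝ) * ((1/2) * (1 - oueP ε)^(θ.card - 1) * oueP ε^(m - θ.card))
      + ((m:ℝ) - θ.card) * ((1/2) * (1 - oueP ε)^θ.card * oueP ε^(m - θ.card - 1)) := by
  rw [← Finset.sum_add_sum_compl θ]
  have h1 : ∑ z ∈ θ, oueProb m ε z θ
      = (θ.card : ℝ) * ((1/2) * (1 - oueP ε)^(θ.card - 1) * oueP ε^(m - θ.card)) := by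
    have hc : ∀ z ∈ θ, oueProb m ε z θ
        = (1/2) * (1 - oueP ε)^(θ.card - 1) * oueP ε^(m - θ.card) := fun z hz => by
      simp [oueProb, hz]
    rw [Finset.sum_congr rfl hc, Finset.sum_const, nsmul_eq_mul]
  have h2 : ∑ z ∈ θᶜ, oueProb m ε z θ
      = ((m:ℝ) - θ.card) * ((1/2) * (1 - oueP ε)^θ.card * oueP ε^(m - θ.card - 1)) := by
    have hc : ∀ z ∈ θᶜ, oueProb m ε z θ
        = (1/2) * (1 - oueP ε)^θ.card * oueP ε^(m - θ.card - 1) := fun z hz => by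
      simp only [Finset.mem_compl] at hz; simp [oueProb, hz]
    rw [Finset.sum_congr rfl hc, Finset.sum_const, nsmul_eq_mul]
    congr 1
    rw [Finset.card_compl, Fintype.card_fin, Nat.cast_sub (Finset.card_le_univ θ |>.trans (by simp))]
  rw [h1, h2]

lemma oue_adv_le (m : ℕ) (hm : 2 ≤ m) (ε : ℝ) (hε : 0 ≤ ε)
    (A : Finset (Fin m) → Fin m → ℝ) (hA0 : ∀ θ z, 0 ≤ A θ z) (hA1 : ∀ θ, ∑ z, A θ z = 1) :
    (∑ z : Fin m, (1 / (m : ℝ)) * ∑ θ : Finset (Fin m), oueProb m ε z θ * A θ z) -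
      (∑ z₀ : Fin m, ∑ z : Fin m, (1 / (m : ℝ)) * (1 / (m : ℝ)) *
        ∑ θ : Finset (Fin m), oueProb m ε z₀ θ * A θ z) ≤ oueBound m ε := by
  have hp1 : oueP ε < 1 := oueP_lt_one ε
  have hp0 : 0 < oueP ε := oueP_pos ε
  have hph : 1/2 ≤ oueP ε := oueP_half ε hε
  have hmR : (0:ℝ) < m := by positivity
  set B : Finset (Fin m) → ℝ := fun θ => if θ.card = 0 then (0:ℝ) else
      ((m:ℝ) - θ.card)/(m:ℝ)^2 * ((oueP ε - (1 - oueP ε))/2 * (1 - oueP ε)^(θ.card-1)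
        * oueP ε^(m-θ.card-1)) with hB
  -- rewrite the advantage as a double sum
  have e1 : (∑ z : Fin m, (1 / (m : ℝ)) * ∑ θ : Finset (Fin m), oueProb m ε z θ * A θ z)
      = ∑ θ : Finset (Fin m), ∑ z : Fin m, A θ z * ((1/(m:ℝ)) * oueProb m ε z θ) := by
    simp only [Finset.mul_sum]
    rw [Finset.sum_comm]
    exact Finset.sum_congr rfl fun θ _ => Finset.sum_congr rfl fun z _ => by ring
  have e2 : (∑ z₀ : Fin m, ∑ z : Fin m, (1 / (m : ℝ)) * (1 / (m : ℝ)) *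
        ∑ θ : Finset (Fin m), oueProb m ε z₀ θ * A θ z)
      = ∑ θ : Finset (Fin m), ∑ z : Fin m, A θ z *
          ((1/(m:ℝ)) * (1/(m:ℝ)) * ∑ z₀ : Fin m, oueProb m ε z₀ θ) := by
    simp only [Finset.mul_sum]
    calc ∑ z₀ : Fin m, ∑ z : Fin m, ∑ θ : Finset (Fin m),
            1/(m:ℝ) * (1/(m:ℝ)) * (oueProb m ε z₀ θ * A θ z)
        = ∑ z₀ : Fin m, ∑ θ : Finset (Fin m), ∑ z : Fin m,
            1/(m:ℝ) * (1/(m:ℝ)) * (oueProb m ε z₀ θ * A θ z) :=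
          Finset.sum_congr rfl fun z₀ _ => Finset.sum_comm
      _ = ∑ θ : Finset (Fin m), ∑ z₀ : Fin m, ∑ z : Fin m,
            1/(m:ℝ) * (1/(m:ℝ)) * (oueProb m ε z₀ θ * A θ z) := Finset.sum_comm
      _ = ∑ θ : Finset (Fin m), ∑ z : Fin m, ∑ z₀ : Fin m,
            1/(m:ℝ) * (1/(m:ℝ)) * (oueProb m ε z₀ θ * A θ z) :=
          Finset.sum_congr rfl fun θ _ => Finset.sum_comm
      _ = ∑ θ : Finset (Fin m), ∑ z : Fin m, ∑ z₀ : Fin m,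
            A θ z * (1/(m:ℝ) * (1/(m:ℝ)) * oueProb m ε z₀ θ) :=
          Finset.sum_congr rfl fun θ _ => Finset.sum_congr rfl fun z _ =>
            Finset.sum_congr rfl fun z₀ _ => by ring
  have eL : (∑ z : Fin m, (1 / (m : ℝ)) * ∑ θ : Finset (Fin m), oueProb m ε z θ * A θ z) -
      (∑ z₀ : Fin m, ∑ z : Fin m, (1 / (m : ℝ)) * (1 / (m : ℝ)) *
        ∑ θ : Finset (Fin m), oueProb m ε z₀ θ * A θ z)
      = ∑ θ : Finset (Fin m), ∑ z : Fin m, A θ z * ((1/(m:ℝ)) * oueProb m ε z θ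
          - (1/(m:ℝ)) * (1/(m:ℝ)) * ∑ z₀ : Fin m, oueProb m ε z₀ θ) := by
    rw [e1, e2, ← Finset.sum_sub_distrib]
    exact Finset.sum_congr rfl fun θ _ => by
      rw [← Finset.sum_sub_distrib]
      exact Finset.sum_congr rfl fun z _ => by ring
  -- pointwise bound
  have hcB : ∀ (θ : Finset (Fin m)) (z : Fin m),
      (1/(m:ℝ)) * oueProb m ε z θ - (1/(m:ℝ)) * (1/(m:ℝ)) * (∑ z₀ : Fin m, oueProb m ε z₀ θ)
        ≤ B θ := by
    intro θ z
    have hkm : θ.card ≤ m := (Finset.card_le_univ θ).trans (by simp)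
    rw [sum_oueProb]
    by_cases hz : z ∈ θ
    · have hk1 : 1 ≤ θ.card := Finset.card_pos.mpr ⟨z, hz⟩
      rw [hB]
      simp only [oueProb, if_pos hz, if_neg (by omega : ¬ θ.card = 0)]
      by_cases hke : θ.card = m
      · rw [hke]
        refine le_of_eq ?_
        rw [Nat.sub_self]
        field_simp
        ring
      · have hA' : (1 - oueP ε)^θ.card = (1 - oueP ε)^(θ.card-1) * (1 - oueP ε) := by
          rw [← pow_succ]; congr 1; omega
        have hB' : oueP ε^(m-θ.card) = oueP ε^(m-θ.card-1) * oueP ε := by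
          rw [← pow_succ]; congr 1; omega
        rw [hA', hB']
        refine le_of_eq ?_
        field_simp
        ring
    · have hθu : θ ≠ Finset.univ := fun h => hz (h ▸ Finset.mem_univ z)
      have hklt : θ.card < m := lt_of_le_of_ne hkm (fun h => hθu
        ((Finset.card_eq_iff_eq_univ θ).mp (by rw [Fintype.card_fin]; exact h)))
      simp only [oueProb, if_neg hz]
      by_cases hk0 : θ.card = 0
      · rw [hB]
        simp only [if_pos hk0, hk0]
        refine le_of_eq ?_
        push_cast
        field_simp
        ring
      · have hk1 : 1 ≤ θ.card := by omega
        have hA' : (1 - oueP ε)^θ.card = (1 - oueP ε)^(θ.card-1) * (1 - oueP ε) := by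
          rw [← pow_succ]; congr 1; omega
        have hB' : oueP ε^(m-θ.card) = oueP ε^(m-θ.card-1) * oueP ε := by
          rw [← pow_succ]; congr 1; omega
        have hB0 : 0 ≤ B θ := by
          rw [hB]
          simp only [if_neg hk0]
          have h1 : (0:ℝ) ≤ ((m:ℝ) - θ.card)/(m:ℝ)^2 := by
            apply div_nonneg _ (by positivity)
            have : (θ.card:ℝ) ≤ m := by exact_mod_cast hkm
            linarith
          refine mul_nonneg h1 (mul_nonneg (mul_nonneg (by linarith)
            (pow_nonneg (by linarith) _)) (pow_nonneg (by linarith) _))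
        refine le_trans ?_ hB0
        rw [hA', hB']
        have key : (1/(m:ℝ)) * ((1/2) * ((1 - oueP ε)^(θ.card-1) * (1 - oueP ε))
              * oueP ε^(m-θ.card-1))
            - (1/(m:ℝ)) * (1/(m:ℝ)) * ((θ.card:ℝ) * ((1/2) * (1 - oueP ε)^(θ.card-1)
              * (oueP ε^(m-θ.card-1) * oueP ε))
              + ((m:ℝ) - θ.card) * ((1/2) * ((1 - oueP ε)^(θ.card-1) * (1 - oueP ε))
              * oueP ε^(m-θ.card-1)))
            = ((θ.card:ℝ) * ((1 - oueP ε) - oueP ε) * (1 - oueP ε)^(θ.card-1)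
              * oueP ε^(m-θ.card-1)) / (2*(m:ℝ)^2) := by
          field_simp
          ring
        rw [key]
        apply div_nonpos_of_nonpos_of_nonneg _ (by positivity)
        have hk0' : (0:ℝ) ≤ (θ.card:ℝ) := by positivity
        have hqp : (1 - oueP ε) - oueP ε ≤ 0 := by linarith
        have := mul_nonpos_of_nonneg_of_nonpos hk0' hqp
        refine mul_nonpos_of_nonpos_of_nonneg (mul_nonpos_of_nonpos_of_nonneg this
          (pow_nonneg (by linarith) _)) (pow_nonneg (by linarith) _)
  rw [eL]
  calc ∑ θ : Finset (Fin m), ∑ z : Fin m, A θ z * ((1/(m:ℝ)) * oueProb m ε z θ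
          - (1/(m:ℝ)) * (1/(m:ℝ)) * ∑ z₀ : Fin m, oueProb m ε z₀ θ)
      ≤ ∑ θ : Finset (Fin m), ∑ z : Fin m, A θ z * B θ :=
        Finset.sum_le_sum fun θ _ => Finset.sum_le_sum fun z _ =>
          mul_le_mul_of_nonneg_left (hcB θ z) (hA0 θ z)
    _ = ∑ θ : Finset (Fin m), B θ := by
        refine Finset.sum_congr rfl fun θ _ => ?_
        rw [← Finset.sum_mul, hA1 θ, one_mul]
    _ = oueBound m ε := by
        rw [hB, oueBound]
        exact sum_B m hm (oueP ε) (ne_of_lt hp1)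

lemma oueP_tendsto : Filter.Tendsto oueP Filter.atTop (nhds 1) := by
  have h1 : Filter.Tendsto (fun ε : ℝ => Real.exp ε + 1) Filter.atTop Filter.atTop :=
    Filter.tendsto_atTop_add_const_right _ 1 Real.tendsto_exp_atTop
  have h2 : Filter.Tendsto (fun ε : ℝ => (Real.exp ε + 1)⁻¹) Filter.atTop (nhds 0) :=
    h1.inv_tendsto_atTop
  have h3 : oueP = fun ε => 1 - (Real.exp ε + 1)⁻¹ := by
    funext ε
    have h := Real.exp_pos ε
    rw [oueP]
    field_simp
    ring
  rw [h3]
  have := (tendsto_const_nhds (x := (1:ℝ)) (f := Filter.atTop (α := ℝ))).sub h2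
  simpa using this

lemma oueBound_tendsto (m : ℕ) (hm : 2 ≤ m) :
    Filter.Tendsto (fun ε => oueBound m ε) Filter.atTop (nhds (((m : ℝ) - 1) / (2 * m))) := by
  have hm0 : (m:ℝ) ≠ 0 := by positivity
  have hfun : (fun ε => oueBound m ε) = (fun x : ℝ =>
      (2 * x - 1) * (∑ i ∈ Finset.range (m-1), x ^ i) / (2*m)) ∘ oueP := by
    funext ε
    have hp1 : oueP ε < 1 := oueP_lt_one ε
    have hq : (1 : ℝ) - oueP ε ≠ 0 := by intro h; linarith [sub_eq_zero.mp h]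
    have hg := geom_sum_mul (oueP ε) (m-1)
    have hgs : 1 - oueP ε ^ (m-1)
        = (∑ i ∈ Finset.range (m-1), oueP ε ^ i) * (1 - oueP ε) := by
      linear_combination hg
    simp only [Function.comp, oueBound, hgs]
    field_simp
  rw [hfun]
  have hc : Continuous (fun x : ℝ =>
      (2 * x - 1) * (∑ i ∈ Finset.range (m-1), x ^ i) / (2*m)) := by
    apply Continuous.div_const
    exact ((continuous_const.mul continuous_id).sub continuous_const).mul
      (continuous_finset_sum _ fun i _ => continuous_pow i)
  have hval : (2 * (1:ℝ) - 1) * (∑ i ∈ Finset.range (m-1), (1:ℝ) ^ i) / (2*m)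
      = ((m : ℝ) - 1) / (2 * m) := by
    simp only [one_pow, Finset.sum_const, Finset.card_range, nsmul_eq_mul, mul_one]
    rw [Nat.cast_sub (by omega)]
    norm_num
  rw [← hval]
  exact (hc.tendsto 1).comp oueP_tendsto

/-- For the optimal unary encoding mechanism with uniform prior on `m`
elements, the 0-reconstruction advantage of any attack without auxiliary knowledge is bounded
by `((2p−1)(1 − p^{m−1}))/(2m(1−p))` with `p = e^ε/(e^ε+1)`, and this bound converges to
`(m−1)/(2m)` as `ε → ∞`. -/
theorem oue_uniform_rad_bound_and_limit (m : ℕ) (hm : 2 ≤ m) :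
    (∀ ε : ℝ, 0 ≤ ε → ∀ A : Finset (Fin m) → Fin m → ℝ,
      (∀ θ z, 0 ≤ A θ z) → (∀ θ, ∑ z, A θ z = 1) →
      (∑ z : Fin m, (1 / (m : ℝ)) * ∑ θ : Finset (Fin m), oueProb m ε z θ * A θ z) -
        (∑ z₀ : Fin m, ∑ z : Fin m, (1 / (m : ℝ)) * (1 / (m : ℝ)) *
          ∑ θ : Finset (Fin m), oueProb m ε z₀ θ * A θ z) ≤ oueBound m ε) ∧
    Tendsto (fun ε => oueBound m ε) atTop (nhds (((m : ℝ) - 1) / (2 * m))) := ⟨fun ε hε A hA0 hA1 => oue_adv_le m hm ε hε A hA0 hA1, oueBound_tendsto m hm⟩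
end

section
/- Every (ε,δ)-DP mechanism satisfies f-DP with f(α) = max{1 − δ − e^ε·α, (1 − δ − α)/e^ε}, and substituting this into the f-DP advantage bound yields η-RAD ≤ min{ κ⁺(e^ε − 1) + δ, ((1 − κ⁻)(e^ε − 1) + δ)/e^ε }, since max_{α ∈ [κ⁻,κ⁺]} (1 − f₁(α) − α) = κ⁺(e^ε − 1) + δ for f₁(α) = 1 − δ − e^ε α and max_{α ∈ [κ⁻,κ⁺]} (1 − f₂(α) − α) = ((1−κ⁻)(e^ε−1)+δ)/e^ε for f₂(α) = (1−δ−α)/e^ε. -/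
/-!
Testing the DP inequality on `S` gives the first line `1 − δ − e^ε·Q(S)` of the trade-off
bound, and testing the reverse inequality on `Sᶜ` gives the second, `(1 − δ − Q(S))/e^ε`.
For the maxima, `α ↦ 1 − f₁(α) − α` is increasing and `α ↦ 1 − f₂(α) − α` decreasing
(as `e^ε ≥ 1`), so they peak at `κ⁺` and `κ⁻` respectively; since `f ≥ f₁, f₂` pointwise,
the advantage of `f` is bounded by both.
-/

open MeasureTheory

theorem MonotoneOn.ciSup_Icc_eq {α β : Type*} [Preorder α] [ConditionallyCompleteLattice β]
    {f : α → β} {a b : α} (hab : a ≤ b) (hf : MonotoneOn f (Set.Icc a b)) :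
    ⨆ x : Set.Icc a b, f x = f b := by
  rw [← sSup_image', hf.sSup_image_Icc hab]

theorem AntitoneOn.ciSup_Icc_eq {α β : Type*} [Preorder α] [ConditionallyCompleteLattice β]
    {f : α → β} {a b : α} (hab : a ≤ b) (hf : AntitoneOn f (Set.Icc a b)) :
    ⨆ x : Set.Icc a b, f x = f a := by
  rw [← sSup_image', hf.sSup_image_Icc hab]

theorem le_one_sub_max_of_le_mul_add {c δ p q : ℝ} (hc : 0 < c)
    (hpq : p ≤ c * q + δ) (hqp : 1 - q ≤ c * (1 - p) + δ) :
    p ≤ 1 - max (1 - δ - c * q) ((1 - δ - q) / c) := by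
  have h₂ : (1 - δ - q) / c ≤ 1 - p := by
    rw [div_le_iff₀ hc]
    linarith
  have h₁ : 1 - δ - c * q ≤ 1 - p := by linarith
  linarith [max_le h₁ h₂]

theorem toReal_le_one_sub_max_of_le_mul_add {Θ : Type*} [MeasurableSpace Θ] {P Q : Measure Θ}
    [IsProbabilityMeasure P] [IsProbabilityMeasure Q] {S : Set Θ} (hS : MeasurableSet S)
    {c δ : ℝ} (hc : 0 < c) (hPQ : (P S).toReal ≤ c * (Q S).toReal + δ)
    (hQP : (Q Sᶜ).toReal ≤ c * (P Sᶜ).toReal + δ) :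
    (P S).toReal ≤ 1 - max (1 - δ - c * (Q S).toReal) ((1 - δ - (Q S).toReal) / c) := by
  have hP : (P Sᶜ).toReal = 1 - (P S).toReal := probReal_compl_eq_one_sub hS
  have hQ : (Q Sᶜ).toReal = 1 - (Q S).toReal := probReal_compl_eq_one_sub hS
  rw [hP, hQ] at hQP
  exact le_one_sub_max_of_le_mul_add hc hPQ hQP

theorem monotone_one_sub_linear_tradeoff_sub {c : ℝ} (hc : 1 ≤ c) (δ : ℝ) :
    Monotone fun α : ℝ => 1 - (1 - δ - c * α) - α := by
  intro x y hxy
  nlinarith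

theorem antitone_one_sub_scaled_tradeoff_sub {c : ℝ} (hc : 1 ≤ c) (δ : ℝ) :
    Antitone fun α : ℝ => 1 - (1 - δ - α) / c - α := by
  intro x y hxy
  have hscaled : (y - x) / c ≤ y - x := div_le_self (sub_nonneg.2 hxy) hc
  have hsplit : (1 - δ - x) / c = (1 - δ - y) / c + (y - x) / c := by ring
  dsimp only
  linarith

theorem dp_implies_fdp_and_max_bounds_general {Θ : Type*} [MeasurableSpace Θ]
    (ε δ : ℝ) (hε : 0 ≤ ε)
    (κm κp : ℝ) (hmp : κm ≤ κp) :
    (∀ P Q : Measure Θ, IsProbabilityMeasure P → IsProbabilityMeasure Q →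
      (∀ S : Set Θ, MeasurableSet S →
        (P S).toReal ≤ Real.exp ε * (Q S).toReal + δ ∧
        (Q S).toReal ≤ Real.exp ε * (P S).toReal + δ) →
      ∀ S : Set Θ, MeasurableSet S →
        (P S).toReal ≤ 1 - max (1 - δ - Real.exp ε * (Q S).toReal)
          ((1 - δ - (Q S).toReal) / Real.exp ε)) ∧
    (⨆ α : Set.Icc κm κp, (1 - (1 - δ - Real.exp ε * (α : ℝ)) - α)) =
      κp * (Real.exp ε - 1) + δ ∧
    (⨆ α : Set.Icc κm κp, (1 - (1 - δ - (α : ℝ)) / Real.exp ε - α)) =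
      ((1 - κm) * (Real.exp ε - 1) + δ) / Real.exp ε ∧
    (⨆ α : Set.Icc κm κp,
        (1 - max (1 - δ - Real.exp ε * (α : ℝ)) ((1 - δ - (α : ℝ)) / Real.exp ε) - α)) ≤
      min (κp * (Real.exp ε - 1) + δ) (((1 - κm) * (Real.exp ε - 1) + δ) / Real.exp ε) := by
  have he : 1 ≤ Real.exp ε := Real.one_le_exp hε
  have hmono := monotone_one_sub_linear_tradeoff_sub he δ
  have hanti := antitone_one_sub_scaled_tradeoff_sub he δ
  have hκp : κp * (Real.exp ε - 1) + δ = 1 - (1 - δ - Real.exp ε * κp) - κp := by ring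
  have hκm : ((1 - κm) * (Real.exp ε - 1) + δ) / Real.exp ε =
      1 - (1 - δ - κm) / Real.exp ε - κm := by
    field_simp
    ring
  refine ⟨fun P Q _ _ hdp S hS => ?_, ?_, ?_, ?_⟩
  · exact toReal_le_one_sub_max_of_le_mul_add hS (Real.exp_pos ε) (hdp S hS).1
      (hdp Sᶜ hS.compl).2
  · rw [(hmono.monotoneOn _).ciSup_Icc_eq hmp, hκp]
  · rw [(hanti.antitoneOn _).ciSup_Icc_eq hmp, hκm]
  · have : Nonempty (Set.Icc κm κp) := (Set.nonempty_Icc.2 hmp).to_subtype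
    refine ciSup_le fun ⟨α, hακm, hακp⟩ => le_min ?_ ?_
    · rw [hκp]
      exact (sub_le_sub_right (sub_le_sub_left (le_max_left _ _) 1) α).trans (hmono hακp)
    · rw [hκm]
      exact (sub_le_sub_right (sub_le_sub_left (le_max_right _ _) 1) α).trans (hanti hακm)

/-- Every (ε,δ)-DP mechanism satisfies `f`-DP with
`f(α) = max{1 − δ − e^ε·α, (1 − δ − α)/e^ε}`, and substituting this `f` into the `f`-DP
advantage bound yields `η-RAD ≤ min{κ⁺(e^ε − 1) + δ, ((1 − κ⁻)(e^ε − 1) + δ)/e^ε}`: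
indeed `max_{α∈[κ⁻,κ⁺]} (1 − f₁(α) − α) = κ⁺(e^ε − 1) + δ` for `f₁(α) = 1 − δ − e^ε α`,
`max_{α∈[κ⁻,κ⁺]} (1 − f₂(α) − α) = ((1−κ⁻)(e^ε−1)+δ)/e^ε` for `f₂(α) = (1−δ−α)/e^ε`,
and hence `max_{α∈[κ⁻,κ⁺]} (1 − f(α) − α) ≤ min` of the two. -/
theorem dp_implies_fdp_and_max_bounds {Θ : Type*} [MeasurableSpace Θ]
    (ε δ : ℝ) (hε : 0 ≤ ε) (hδ0 : 0 ≤ δ) (hδ1 : δ ≤ 1)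
    (κm κp : ℝ) (h0 : 0 ≤ κm) (hmp : κm ≤ κp) (hp1 : κp ≤ 1) :
    (∀ P Q : Measure Θ, IsProbabilityMeasure P → IsProbabilityMeasure Q →
      (∀ S : Set Θ, MeasurableSet S →
        (P S).toReal ≤ Real.exp ε * (Q S).toReal + δ ∧
        (Q S).toReal ≤ Real.exp ε * (P S).toReal + δ) →
      ∀ S : Set Θ, MeasurableSet S →
        (P S).toReal ≤ 1 - max (1 - δ - Real.exp ε * (Q S).toReal)
          ((1 - δ - (Q S).toReal) / Real.exp ε)) ∧
    (⨆ α : Set.Icc κm κp, (1 - (1 - δ - Real.exp ε * (α : ℝ)) - α)) =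
      κp * (Real.exp ε - 1) + δ ∧
    (⨆ α : Set.Icc κm κp, (1 - (1 - δ - (α : ℝ)) / Real.exp ε - α)) =
      ((1 - κm) * (Real.exp ε - 1) + δ) / Real.exp ε ∧
    (⨆ α : Set.Icc κm κp,
        (1 - max (1 - δ - Real.exp ε * (α : ℝ)) ((1 - δ - (α : ℝ)) / Real.exp ε) - α)) ≤
      min (κp * (Real.exp ε - 1) + δ) (((1 - κm) * (Real.exp ε - 1) + δ) / Real.exp ε) :=
  dp_implies_fdp_and_max_bounds_general ε δ hε κm κp hmp
end

section
/- Let M be (ε,δ)-DP on a domain of size m, and let {Θ₁,…,Θ_m} be a measurable partition of the output space. Then Σ_{i=1}^m Pr(M(z_i) ∈ Θ_i) ≤ (m e^ε + δ m(m−1))/(e^ε + m − 1), and consequently Γ := Σ_i [Pr(M(z_i) ∈ Θ_i) − Pr_π(M ∈ Θ_i)] ≤ (m−1)(e^ε − 1 + δm)/(e^ε + m − 1) for any prior π. -/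
/-!
Write `p i j = Pr(M(z_i) ∈ Θ_j)`; each row of `p` sums to `1`. Differential privacy gives
`p j i ≥ e^{-ε} (p i i - δ)` for every `j ≠ i`, so column `i` sums to at least
`p i i + e^{-ε} (m - 1) (p i i - δ)`. Summing over the columns, the total mass `m` bounds the
trace of `p`, which is the first claim. The prior-weighted term sums to `1` for any prior, so
`Γ` is the trace minus `1` and the second claim follows from the first.
-/

open Function MeasureTheory Finset

theorem sum_measureReal_eq_one_of_partition {α ι : Type*} [MeasurableSpace α] [Fintype ι]
    (μ : Measure α) [IsProbabilityMeasure μ] {s : ι → Set α} (hmeas : ∀ i, MeasurableSet (s i))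
    (hdisj : Pairwise (Disjoint on s)) (hcover : ⋃ i, s i = Set.univ) :
    ∑ i, μ.real (s i) = 1 := by
  rw [← measureReal_iUnion_fintype hdisj hmeas, hcover, probReal_univ]

section StochasticMatrix

variable {ι : Type*} [Fintype ι] {p : ι → ι → ℝ} {e δ : ℝ}

theorem card_sub_one_mul_add_le_mul_sum_col (hdp : ∀ i j, p i i ≤ e * p j i + δ) (i : ι) :
    (Fintype.card ι - 1) * (p i i - δ) + e * p i i ≤ e * ∑ j, p j i := by
  classical
  rw [mul_sum, ← add_sum_erase _ _ (mem_univ i)]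
  have hcard : ((univ.erase i).card : ℝ) = Fintype.card ι - 1 := by
    rw [card_erase_of_mem (mem_univ i), card_univ,
      Nat.cast_sub (Fintype.card_pos_iff.2 ⟨i⟩), Nat.cast_one]
  have hoff : (Fintype.card ι - 1) * (p i i - δ) ≤ ∑ j ∈ univ.erase i, e * p j i := by
    rw [← hcard, ← nsmul_eq_mul, ← sum_const]
    exact sum_le_sum fun j _ => by linarith [hdp i j]
  linarith

theorem sum_diag_mul_le_of_diag_le (hrow : ∀ j, ∑ i, p j i = 1)
    (hdp : ∀ i j, p i i ≤ e * p j i + δ) :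
    (∑ i, p i i) * (e + Fintype.card ι - 1) ≤
      Fintype.card ι * e + δ * Fintype.card ι * (Fintype.card ι - 1) := by
  have hcols : ∑ i, ((Fintype.card ι - 1) * (p i i - δ) + e * p i i) ≤ e * Fintype.card ι :=
    calc _ ≤ ∑ i, e * ∑ j, p j i := sum_le_sum fun i _ => card_sub_one_mul_add_le_mul_sum_col hdp i
      _ = e * ∑ j, ∑ i, p j i := by rw [← mul_sum, sum_comm]
      _ = e * Fintype.card ι := by simp [hrow]
  have hexpand : ∑ i, ((Fintype.card ι - 1) * (p i i - δ) + e * p i i) =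
      (∑ i, p i i) * (e + Fintype.card ι - 1) - δ * Fintype.card ι * (Fintype.card ι - 1) := by
    simp only [sum_add_distrib, mul_sub, sum_sub_distrib, ← mul_sum, sum_const, card_univ,
      nsmul_eq_mul]
    ring
  linarith

theorem sum_diag_sub_sum_mul_col_eq (hrow : ∀ j, ∑ i, p j i = 1) {π : ι → ℝ}
    (hπ : ∑ j, π j = 1) :
    ∑ i, (p i i - ∑ j, π j * p j i) = ∑ i, p i i - 1 := by
  rw [sum_sub_distrib, sum_comm]
  simp [← mul_sum, hrow, hπ]

end StochasticMatrix

theorem dp_partition_lemma_general {Θ : Type*} [MeasurableSpace Θ] (m : ℕ) (hm : 1 ≤ m)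
    (ε δ : ℝ)
    (M : Fin m → Measure Θ) (hprob : ∀ i, IsProbabilityMeasure (M i))
    (hDP : ∀ i j : Fin m, ∀ S : Set Θ, MeasurableSet S →
      ((M i) S).toReal ≤ Real.exp ε * ((M j) S).toReal + δ)
    (Θs : Fin m → Set Θ) (hmeas : ∀ i, MeasurableSet (Θs i))
    (hdisj : Pairwise fun i j => Disjoint (Θs i) (Θs j))
    (hcover : (⋃ i, Θs i) = Set.univ) :
    (∑ i, ((M i) (Θs i)).toReal ≤
        ((m : ℝ) * Real.exp ε + δ * m * (m - 1)) / (Real.exp ε + m - 1)) ∧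
    ∀ π : Fin m → ℝ, (∀ i, 0 ≤ π i) → (∑ i, π i = 1) →
      ∑ i, (((M i) (Θs i)).toReal - ∑ j, π j * ((M j) (Θs i)).toReal) ≤
        ((m : ℝ) - 1) * (Real.exp ε - 1 + δ * m) / (Real.exp ε + m - 1) := by
  simp only [← measureReal_def] at hDP ⊢
  have hrow : ∀ j, ∑ i, (M j).real (Θs i) = 1 := fun j =>
    sum_measureReal_eq_one_of_partition (M j) hmeas hdisj hcover
  have htrace := sum_diag_mul_le_of_diag_le hrow fun i j => hDP i j (Θs i) (hmeas i)
  rw [Fintype.card_fin] at htrace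
  have hdenom : 0 < Real.exp ε + m - 1 := by
    have : (1 : ℝ) ≤ m := by exact_mod_cast hm
    linarith [Real.exp_pos ε]
  refine ⟨(le_div_iff₀ hdenom).2 (by linarith), fun π _ hπ => ?_⟩
  rw [sum_diag_sub_sum_mul_col_eq hrow hπ, le_div_iff₀ hdenom]
  linarith

/-- Let `M` be (ε,δ)-DP on a domain of size `m` (on singleton inputs:
`Pr(M(z) ∈ S) ≤ e^ε Pr(M(z') ∈ S) + δ` for all records and measurable sets), and let
`{Θ₁,…,Θ_m}` be a measurable partition of the output space.  Then
`Σ_i Pr(M(z_i) ∈ Θ_i) ≤ (m e^ε + δ m(m−1))/(e^ε + m − 1)`, and consequently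
`Γ = Σ_i [Pr(M(z_i) ∈ Θ_i) − Pr_π(M ∈ Θ_i)] ≤ (m−1)(e^ε − 1 + δm)/(e^ε + m − 1)`
for any prior `π`. -/
theorem dp_partition_lemma {Θ : Type*} [MeasurableSpace Θ] (m : ℕ) (hm : 1 ≤ m)
    (ε δ : ℝ) (hε : 0 ≤ ε) (hδ : 0 ≤ δ)
    (M : Fin m → Measure Θ) (hprob : ∀ i, IsProbabilityMeasure (M i))
    (hDP : ∀ i j : Fin m, ∀ S : Set Θ, MeasurableSet S →
      ((M i) S).toReal ≤ Real.exp ε * ((M j) S).toReal + δ)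
    (Θs : Fin m → Set Θ) (hmeas : ∀ i, MeasurableSet (Θs i))
    (hdisj : Pairwise fun i j => Disjoint (Θs i) (Θs j))
    (hcover : (⋃ i, Θs i) = Set.univ) :
    (∑ i, ((M i) (Θs i)).toReal ≤
        ((m : ℝ) * Real.exp ε + δ * m * (m - 1)) / (Real.exp ε + m - 1)) ∧
    ∀ π : Fin m → ℝ, (∀ i, 0 ≤ π i) → (∑ i, π i = 1) →
      ∑ i, (((M i) (Θs i)).toReal - ∑ j, π j * ((M j) (Θs i)).toReal) ≤
        ((m : ℝ) - 1) * (Real.exp ε - 1 + δ * m) / (Real.exp ε + m - 1) :=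
  dp_partition_lemma_general m hm ε δ M hprob hDP Θs hmeas hdisj hcover
end

section
/- For an (ε,δ)-DP mechanism on a domain of size m with uniform prior, the 0-reconstruction advantage of any attack without auxiliary knowledge is bounded by ((e^ε − 1 + δm)/(e^ε + m − 1)) · ((m−1)/m). -/
open MeasureTheory

lemma dp_lintegral_aux {Θ : Type*} [MeasurableSpace Θ] (μ ν : Measure Θ)
    [IsProbabilityMeasure μ] [IsProbabilityMeasure ν] (ε δ : ℝ) (hδ : 0 ≤ δ)
    (hDP : ∀ S : Set Θ, MeasurableSet S → (μ S).toReal ≤ Real.exp ε * (ν S).toReal + δ)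
    (f : Θ → ENNReal) (hf : Measurable f) (hf1 : ∀ θ, f θ ≤ 1) :
    (∫⁻ θ, f θ ∂μ).toReal ≤ Real.exp ε * (∫⁻ θ, f θ ∂ν).toReal + δ := by
  set g : Θ → ℝ := fun θ => (f θ).toReal with hgdef
  have hgm : Measurable g := hf.ennreal_toReal
  have hfne : ∀ θ, f θ ≠ ⊤ := fun θ => ((hf1 θ).trans_lt ENNReal.one_lt_top).ne
  have hfg : ∀ θ, ENNReal.ofReal (g θ) = f θ := fun θ => ENNReal.ofReal_toReal (hfne θ)
  have hg1 : ∀ θ, g θ ≤ 1 := fun θ => by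
    have := ENNReal.toReal_mono ENNReal.one_ne_top (hf1 θ)
    simpa using this
  have layer : ∀ (ρ : Measure Θ), ∫⁻ θ, f θ ∂ρ = ∫⁻ t in Set.Ioi 0, ρ {a | t < g a} := by
    intro ρ
    rw [← lintegral_eq_lintegral_meas_lt ρ (Filter.Eventually.of_forall fun θ =>
      ENNReal.toReal_nonneg) hgm.aemeasurable]
    exact lintegral_congr fun θ => (hfg θ).symm
  have hzero : ∀ (ρ : Measure Θ), ∫⁻ t in Set.Ici (1 : ℝ), ρ {a | t < g a} = 0 := by
    intro ρ
    rw [setLIntegral_congr_fun measurableSet_Ici (fun t (ht : (1:ℝ) ≤ t) => ?_), lintegral_zero]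
    have : {a | t < g a} = ∅ := by
      ext a; simp only [Set.mem_setOf_eq, Set.mem_empty_iff_false, iff_false, not_lt]
      exact (hg1 a).trans ht
    simp [this]
  have split : ∀ (ρ : Measure Θ),
      ∫⁻ t in Set.Ioi (0 : ℝ), ρ {a | t < g a} = ∫⁻ t in Set.Ioo (0:ℝ) 1, ρ {a | t < g a} := by
    intro ρ
    rw [← Set.Ioo_union_Ici_eq_Ioi (zero_lt_one (α := ℝ)),
      lintegral_union measurableSet_Ici (by exact Set.disjoint_left.2 fun x hx hx2 => absurd hx2 (not_le.2 hx.2)), hzero, add_zero]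
  have hpt : ∀ t : ℝ, μ {a | t < g a} ≤
      ENNReal.ofReal (Real.exp ε) * ν {a | t < g a} + ENNReal.ofReal δ := by
    intro t
    have hS : MeasurableSet {a | t < g a} := measurableSet_lt measurable_const hgm
    have h := hDP _ hS
    calc μ {a | t < g a} = ENNReal.ofReal ((μ {a | t < g a}).toReal) :=
          (ENNReal.ofReal_toReal (measure_ne_top μ _)).symm
      _ ≤ ENNReal.ofReal (Real.exp ε * (ν {a | t < g a}).toReal + δ) :=
          ENNReal.ofReal_le_ofReal h
      _ ≤ ENNReal.ofReal (Real.exp ε) * ν {a | t < g a} + ENNReal.ofReal δ := by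
          rw [ENNReal.ofReal_add (mul_nonneg (Real.exp_nonneg ε) ENNReal.toReal_nonneg) hδ,
            ENNReal.ofReal_mul (Real.exp_nonneg ε), ENNReal.ofReal_toReal (measure_ne_top ν _)]
  have hanti : Antitone fun t : ℝ => ν {a | t < g a} := by
    intro t s hts
    exact measure_mono fun a (ha : s < g a) => hts.trans_lt ha
  have key : ∫⁻ θ, f θ ∂μ ≤ ENNReal.ofReal (Real.exp ε) * ∫⁻ θ, f θ ∂ν + ENNReal.ofReal δ := by
    rw [layer μ, split μ, layer ν]
    calc ∫⁻ t in Set.Ioo (0:ℝ) 1, μ {a | t < g a}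
        ≤ ∫⁻ t in Set.Ioo (0:ℝ) 1,
            (ENNReal.ofReal (Real.exp ε) * ν {a | t < g a} + ENNReal.ofReal δ) :=
          lintegral_mono fun t => hpt t
      _ = ENNReal.ofReal (Real.exp ε) * (∫⁻ t in Set.Ioo (0:ℝ) 1, ν {a | t < g a}) +
            ENNReal.ofReal δ * volume (Set.Ioo (0:ℝ) 1) := by
          rw [lintegral_add_right _ measurable_const, lintegral_const_mul _ hanti.measurable,
            setLIntegral_const]
      _ ≤ ENNReal.ofReal (Real.exp ε) * (∫⁻ t in Set.Ioi (0:ℝ), ν {a | t < g a}) +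
            ENNReal.ofReal δ := by
          gcongr
          · exact Set.Ioo_subset_Ioi_self
          · simp [Real.volume_Ioo]
  have hνfin : ∫⁻ θ, f θ ∂ν ≤ 1 := by
    calc ∫⁻ θ, f θ ∂ν ≤ ∫⁻ _, 1 ∂ν := lintegral_mono hf1
      _ = 1 := by simp
  have hνne : ∫⁻ θ, f θ ∂ν ≠ ⊤ := (hνfin.trans_lt ENNReal.one_lt_top).ne
  have hrne : ENNReal.ofReal (Real.exp ε) * ∫⁻ θ, f θ ∂ν + ENNReal.ofReal δ ≠ ⊤ := by
    apply ENNReal.add_ne_top.2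
    exact ⟨ENNReal.mul_ne_top ENNReal.ofReal_ne_top hνne, ENNReal.ofReal_ne_top⟩
  have := ENNReal.toReal_mono hrne key
  rwa [ENNReal.toReal_add (ENNReal.mul_ne_top ENNReal.ofReal_ne_top hνne) ENNReal.ofReal_ne_top,
    ENNReal.toReal_mul, ENNReal.toReal_ofReal (Real.exp_nonneg ε),
    ENNReal.toReal_ofReal hδ] at this

/-- For an (ε,δ)-DP mechanism on a domain of size `m` with uniform prior,
the 0-reconstruction advantage of any attack `A` without auxiliary knowledge (the attack gets
only the mechanism output and makes a randomized guess of the record, success being exact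
reconstruction) is bounded by `((e^ε − 1 + δm)/(e^ε + m − 1)) · ((m−1)/m)`. -/
theorem dp_uniform_zero_rad_bound {Θ : Type*} [MeasurableSpace Θ] (m : ℕ) (hm : 1 ≤ m)
    (ε δ : ℝ) (hε : 0 ≤ ε) (hδ : 0 ≤ δ)
    (M : Fin m → Measure Θ) (hprob : ∀ i, IsProbabilityMeasure (M i))
    (hDP : ∀ i j : Fin m, ∀ S : Set Θ, MeasurableSet S →
      ((M i) S).toReal ≤ Real.exp ε * ((M j) S).toReal + δ)
    (A : Θ → PMF (Fin m)) (hA : ∀ i, Measurable fun θ => (A θ) i) :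
    (∑ i, (1 / (m : ℝ)) * (∫⁻ θ, (A θ) i ∂(M i)).toReal) -
      (∑ i, ∑ j, (1 / (m : ℝ)) * (1 / (m : ℝ)) * (∫⁻ θ, (A θ) i ∂(M j)).toReal) ≤
      ((Real.exp ε - 1 + δ * m) / (Real.exp ε + m - 1)) * (((m : ℝ) - 1) / m) := by
  haveI := hprob
  set c := Real.exp ε with hc
  have hc1 : 1 ≤ c := Real.one_le_exp hε
  have hm0 : (0 : ℝ) < m := by exact_mod_cast hm
  have hm1 : (1 : ℝ) ≤ m := by exact_mod_cast hm
  set a : Fin m → Fin m → ℝ := fun i j => (∫⁻ θ, (A θ) i ∂(M j)).toReal with ha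
  -- column sums are 1
  have hsumone : ∀ θ, ∑ i, ((A θ) i : ENNReal) = 1 := fun θ => by
    rw [← tsum_fintype (L := SummationFilter.unconditional _)]; exact (A θ).tsum_coe
  have hne : ∀ i j, ∫⁻ θ, (A θ) i ∂(M j) ≠ ⊤ := by
    intro i j
    have : ∫⁻ θ, (A θ) i ∂(M j) ≤ 1 := by
      calc ∫⁻ θ, (A θ) i ∂(M j) ≤ ∫⁻ _, 1 ∂(M j) := lintegral_mono fun θ => (A θ).coe_le_one i
        _ = 1 := by simp
    exact (this.trans_lt ENNReal.one_lt_top).ne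
  have hcol : ∀ j, ∑ i, a i j = 1 := by
    intro j
    have : ∑ i, ∫⁻ θ, (A θ) i ∂(M j) = 1 := by
      rw [← lintegral_finset_sum _ fun i _ => hA i]
      simp only [hsumone]
      simp
    rw [ha]
    rw [← ENNReal.toReal_sum fun i _ => hne i j, this, ENNReal.toReal_one]
  have hdp : ∀ i j, a i i ≤ c * a i j + δ := fun i j =>
    dp_lintegral_aux (M i) (M j) ε δ hδ (hDP i j) _ (hA i) (fun θ => (A θ).coe_le_one i)
  -- total sum
  set s := ∑ i, a i i with hs
  have hT : ∑ i, ∑ j, a i j = m := by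
    rw [Finset.sum_comm]
    simp [hcol]
  -- key inequality
  have hkey : ((m : ℝ) - 1) * s ≤ c * ((m : ℝ) - s) + (m : ℝ) * ((m : ℝ) - 1) * δ := by
    have h1 : ∀ i : Fin m, ((m : ℝ) - 1) * a i i ≤
        c * ((∑ j, a i j) - a i i) + ((m : ℝ) - 1) * δ := by
      intro i
      have h2 : ∑ j ∈ Finset.univ.erase i, a i i ≤
          ∑ j ∈ Finset.univ.erase i, (c * a i j + δ) :=
        Finset.sum_le_sum fun j _ => hdp i j
      rw [Finset.sum_const, Finset.card_erase_of_mem (Finset.mem_univ i),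
        Finset.card_univ, Fintype.card_fin] at h2
      have hcast : ((m - 1 : ℕ) : ℝ) = (m : ℝ) - 1 := by
        push_cast [hm]; ring
      rw [Finset.sum_add_distrib, Finset.sum_const, Finset.card_erase_of_mem (Finset.mem_univ i),
        Finset.card_univ, Fintype.card_fin, ← Finset.mul_sum,
        Finset.sum_erase_eq_sub (Finset.mem_univ i)] at h2
      rw [nsmul_eq_mul, hcast] at h2
      rw [nsmul_eq_mul, hcast] at h2
      linarith [h2]
    have h3 := Finset.sum_le_sum fun i (_ : i ∈ Finset.univ) => h1 i
    rw [← Finset.mul_sum, ← hs] at h3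
    have h4 : ∑ i, (c * ((∑ j, a i j) - a i i) + ((m : ℝ) - 1) * δ) =
        c * ((m : ℝ) - s) + (m : ℝ) * ((m : ℝ) - 1) * δ := by
      rw [Finset.sum_add_distrib, Finset.sum_const, Finset.card_univ, Fintype.card_fin,
        ← Finset.mul_sum, Finset.sum_sub_distrib, hT, ← hs, nsmul_eq_mul]
      ring
    linarith [h3, h4 ▸ h3]
  -- rewrite LHS
  have hL1 : ∑ i, (1 / (m : ℝ)) * a i i = (1 / (m : ℝ)) * s := by
    rw [hs, Finset.mul_sum]
  have hL2 : ∑ i, ∑ j, (1 / (m : ℝ)) * (1 / (m : ℝ)) * a i j = 1 / (m : ℝ) := by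
    have : ∑ i, ∑ j, (1 / (m : ℝ)) * (1 / (m : ℝ)) * a i j =
        (1 / (m : ℝ)) * (1 / (m : ℝ)) * (∑ i, ∑ j, a i j) := by
      rw [Finset.mul_sum]
      exact Finset.sum_congr rfl fun i _ => by rw [Finset.mul_sum]
    rw [this, hT]
    field_simp
  rw [hL1, hL2]
  -- final algebra
  have hD : (0 : ℝ) < c + m - 1 := by linarith
  rw [div_mul_div_comm, le_div_iff₀ (by positivity : (0:ℝ) < (c + m - 1) * m)]
  have expand : ((1 / (m:ℝ)) * s - 1 / m) * ((c + m - 1) * m) = (s - 1) * (c + m - 1) := by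
    field_simp
  rw [expand]
  nlinarith [hkey]
end

section
/- If each of T mechanisms has total variation at most Δ, then their T-fold (adaptive) composition has total variation at most 1 − (1−Δ)^T, and consequently the η-reconstruction advantage of any attack on the composed mechanism is at most (1 − (1−Δ)^T)·(1 − κ_π). -/
open MeasureTheory
open scoped ENNReal

/-- The space of histories (tuples of outputs) after `t` adaptive rounds. -/
def Hist (Θ : Type*) : ℕ → Type _
  | 0 => PUnit
  | t + 1 => Hist Θ t × Θ

instance histMeasurableSpace (Θ : Type*) [MeasurableSpace Θ] :
    ∀ t, MeasurableSpace (Hist Θ t)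
  | 0 => (inferInstance : MeasurableSpace PUnit)
  | t + 1 => @Prod.instMeasurableSpace _ _ (histMeasurableSpace Θ t) inferInstance

/-- The `T`-fold adaptive composition of the mechanisms `M t`, where `M t z h` is the output
distribution of the `(t+1)`-st mechanism on dataset `z` given the history `h` of previous
outputs: `M(D) = (M₁(D), M₂(D, Y₁), …, M_T(D, Y_{T−1}))`. -/
noncomputable def compMeasure {Z Θ : Type*} [MeasurableSpace Θ]
    (M : (t : ℕ) → Z → Hist Θ t → Measure Θ) (z : Z) : (T : ℕ) → Measure (Hist Θ T)
  | 0 => Measure.dirac PUnit.unit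
  | T + 1 => (compMeasure M z T).bind fun h => (M T z h).map fun θ => (h, θ)


section Aux
open Set

lemma tv_lintegral_diff_le {α : Type*} [MeasurableSpace α] (P Q : Measure α)
    [IsProbabilityMeasure P] [IsProbabilityMeasure Q]
    (f : α → ℝ≥0∞) (hf : Measurable f) (c d ε : ℝ) (hc : 0 ≤ c) (hcd : c ≤ d) (hε : 0 ≤ ε)
    (hfl : ∀ x, ENNReal.ofReal c ≤ f x) (hfu : ∀ x, f x ≤ ENNReal.ofReal d)
    (hPQ : ∀ S : Set α, MeasurableSet S → (P S).toReal - (Q S).toReal ≤ ε) :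
    (∫⁻ x, f x ∂P).toReal - (∫⁻ x, f x ∂Q).toReal ≤ ε * (d - c) := by
  set g : α → ℝ := fun x => (f x).toReal with hg
  have hfne : ∀ x, f x ≠ ∞ := fun x => ne_top_of_le_ne_top ENNReal.ofReal_ne_top (hfu x)
  have hfg : ∀ x, f x = ENNReal.ofReal (g x) := fun x => (ENNReal.ofReal_toReal (hfne x)).symm
  have hgm : Measurable g := hf.ennreal_toReal
  have hgc : ∀ x, c ≤ g x := fun x => by
    have := ENNReal.toReal_mono (hfne x) (hfl x)
    rwa [ENNReal.toReal_ofReal hc] at this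
  have hgd : ∀ x, g x ≤ d := fun x => by
    have := ENNReal.toReal_mono ENNReal.ofReal_ne_top (hfu x)
    rwa [ENNReal.toReal_ofReal (hc.trans hcd)] at this
  have hkey : ∀ (μ : Measure α) [IsProbabilityMeasure μ],
      ∫⁻ x, f x ∂μ = ∫⁻ t in Ioi (0:ℝ), μ {a | t ≤ g a} := by
    intro μ _
    rw [show (∫⁻ x, f x ∂μ) = ∫⁻ x, ENNReal.ofReal (g x) ∂μ from lintegral_congr hfg]
    exact lintegral_eq_lintegral_meas_le μ (ae_of_all _ fun x => hc.trans (hgc x))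
      hgm.aemeasurable
  rw [hkey P, hkey Q]
  have hpt : ∀ t : ℝ, P {a | t ≤ g a} ≤
      Q {a | t ≤ g a} + (Ioc c d).indicator (fun _ => ENNReal.ofReal ε) t := by
    intro t
    rcases le_or_gt t c with htc | htc
    · have hU : {a | t ≤ g a} = univ := eq_univ_of_forall fun a => htc.trans (hgc a)
      rw [hU]
      simp [measure_univ]
    rcases le_or_gt t d with htd | htd
    · have hSm : MeasurableSet {a | t ≤ g a} := measurableSet_le measurable_const hgm
      have h1 := hPQ _ hSm
      have hP : P {a | t ≤ g a} = ENNReal.ofReal ((P {a | t ≤ g a}).toReal) :=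
        (ENNReal.ofReal_toReal (measure_ne_top _ _)).symm
      have hQ : Q {a | t ≤ g a} = ENNReal.ofReal ((Q {a | t ≤ g a}).toReal) :=
        (ENNReal.ofReal_toReal (measure_ne_top _ _)).symm
      rw [indicator_of_mem (mem_Ioc.mpr ⟨htc, htd⟩), hP, hQ, ← ENNReal.ofReal_add ENNReal.toReal_nonneg hε]
      exact ENNReal.ofReal_le_ofReal (by linarith)
    · have hE : {a | t ≤ g a} = ∅ := by
        apply eq_empty_of_forall_notMem
        intro a ha
        exact absurd (le_trans ha (hgd a)) (not_le.mpr htd)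
      simp [hE]
  have hQfin : (∫⁻ t in Ioi (0:ℝ), Q {a | t ≤ g a}) ≠ ∞ := by
    rw [← hkey Q]
    have hle : ∫⁻ x, f x ∂Q ≤ ENNReal.ofReal d :=
      le_trans (lintegral_mono hfu) (by simp [lintegral_const])
    exact ne_top_of_le_ne_top ENNReal.ofReal_ne_top hle
  have hind : (∫⁻ t in Ioi (0:ℝ), (Ioc c d).indicator (fun _ => ENNReal.ofReal ε) t)
      ≤ ENNReal.ofReal (ε * (d - c)) := by
    rw [lintegral_indicator_const measurableSet_Ioc, ENNReal.ofReal_mul hε]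
    refine mul_le_mul_right (le_trans (Measure.restrict_apply_le _ _) ?_) _
    rw [Real.volume_Ioc]
  have h1 : (∫⁻ t in Ioi (0:ℝ), P {a | t ≤ g a}).toReal ≤
      (∫⁻ t in Ioi (0:ℝ), (Q {a | t ≤ g a}
        + (Ioc c d).indicator (fun _ => ENNReal.ofReal ε) t)).toReal := by
    apply ENNReal.toReal_mono
    · rw [lintegral_add_right _ (measurable_const.indicator measurableSet_Ioc)]
      exact ENNReal.add_ne_top.mpr ⟨hQfin, ne_top_of_le_ne_top ENNReal.ofReal_ne_top hind⟩
    · exact lintegral_mono fun t => hpt t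
  have h2 : (∫⁻ t in Ioi (0:ℝ), (Q {a | t ≤ g a}
        + (Ioc c d).indicator (fun _ => ENNReal.ofReal ε) t)).toReal ≤
      (∫⁻ t in Ioi (0:ℝ), Q {a | t ≤ g a}).toReal + ε * (d - c) := by
    rw [lintegral_add_right _ (measurable_const.indicator measurableSet_Ioc),
      ENNReal.toReal_add hQfin (ne_top_of_le_ne_top ENNReal.ofReal_ne_top hind)]
    have := ENNReal.toReal_mono ENNReal.ofReal_ne_top hind
    rw [ENNReal.toReal_ofReal (by nlinarith)] at this
    linarith
  linarith

section Comp
variable {Z Θ : Type*} [MeasurableSpace Θ]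
  (M : (t : ℕ) → Z → Hist Θ t → Measure Θ)

lemma hist_succ_meas {T : ℕ} {S : Set (Hist Θ (T+1))} (hS : MeasurableSet S) (h : Hist Θ T) :
    MeasurableSet (Prod.mk h ⁻¹' S) := measurable_prodMk_left hS

lemma slice_meas (hprob : ∀ t z h, IsProbabilityMeasure (M t z h))
    (hkernel : ∀ (t : ℕ) (z : Z) (S : Set Θ), MeasurableSet S →
      Measurable fun h => M t z h S)
    (T : ℕ) (z : Z) {S : Set (Hist Θ T × Θ)} (hS : MeasurableSet S) :
    Measurable fun h => M T z h (Prod.mk h ⁻¹' S) := by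
  let κ : ProbabilityTheory.Kernel (Hist Θ T) Θ :=
    ⟨M T z, Measure.measurable_of_measurable_coe _ fun s hs => hkernel T z s hs⟩
  haveI : ProbabilityTheory.IsMarkovKernel κ := ⟨fun h => hprob T z h⟩
  exact ProbabilityTheory.Kernel.measurable_kernel_prodMk_left (κ := κ) hS

lemma compMeasure_succ_apply (hprob : ∀ t z h, IsProbabilityMeasure (M t z h))
    (hkernel : ∀ (t : ℕ) (z : Z) (S : Set Θ), MeasurableSet S →
      Measurable fun h => M t z h S)
    (T : ℕ) (z : Z) {S : Set (Hist Θ (T+1))} (hS : MeasurableSet S) :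
    compMeasure M z (T+1) S = ∫⁻ h, M T z h (Prod.mk h ⁻¹' S) ∂(compMeasure M z T) := by
  have hmeas : Measurable fun h : Hist Θ T => (M T z h).map (fun θ => (h, θ)) := by
    apply Measure.measurable_of_measurable_coe
    intro s hs
    have : (fun h : Hist Θ T => (M T z h).map (fun θ => (h, θ)) s)
        = fun h => M T z h (Prod.mk h ⁻¹' s) := by
      funext h
      exact Measure.map_apply measurable_prodMk_left hs
    rw [this]
    exact slice_meas M hprob hkernel T z hs
  show ((compMeasure M z T).bind fun h => (M T z h).map fun θ => (h, θ)) S = _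
  exact (Measure.bind_apply hS hmeas.aemeasurable).trans
    (lintegral_congr fun h => Measure.map_apply measurable_prodMk_left hS)

lemma compMeasure_prob (hprob : ∀ t z h, IsProbabilityMeasure (M t z h))
    (hkernel : ∀ (t : ℕ) (z : Z) (S : Set Θ), MeasurableSet S →
      Measurable fun h => M t z h S) :
    ∀ (T : ℕ) (z : Z), IsProbabilityMeasure (compMeasure M z T) := by
  intro T
  induction T with
  | zero => intro z; show IsProbabilityMeasure (Measure.dirac PUnit.unit); infer_instance
  | succ T ih =>
    intro z
    haveI := ih z
    constructor
    rw [compMeasure_succ_apply M hprob hkernel T z MeasurableSet.univ]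
    change ∫⁻ h, M T z h (Prod.mk h ⁻¹' (Set.univ : Set (Hist Θ T × Θ))) ∂(compMeasure M z T) = 1
    simp only [Set.preimage_univ]
    have : ∀ h : Hist Θ T, M T z h Set.univ = 1 := fun h => (hprob T z h).measure_univ
    simp only [this, lintegral_one, measure_univ]

lemma compMeasure_tv (Δ : ℝ) (hΔ0 : 0 ≤ Δ) (hΔ1 : Δ ≤ 1)
    (hprob : ∀ t z h, IsProbabilityMeasure (M t z h))
    (hkernel : ∀ (t : ℕ) (z : Z) (S : Set Θ), MeasurableSet S →
      Measurable fun h => M t z h S)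
    (hTV : ∀ (t : ℕ) (z z' : Z) (h : Hist Θ t) (S : Set Θ), MeasurableSet S →
      |(M t z h S).toReal - (M t z' h S).toReal| ≤ Δ) :
    ∀ (T : ℕ) (z z' : Z) (S : Set (Hist Θ T)), MeasurableSet S →
      (compMeasure M z T S).toReal - (compMeasure M z' T S).toReal ≤ 1 - (1 - Δ) ^ T := by
  intro T
  induction T with
  | zero =>
    intro z z' S hS
    show (Measure.dirac PUnit.unit S).toReal - (Measure.dirac PUnit.unit S).toReal ≤ _
    simp
  | succ T ih =>
    intro z z' S hS
    haveI hPz := compMeasure_prob M hprob hkernel T z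
    haveI hPz' := compMeasure_prob M hprob hkernel T z'
    set μ := compMeasure M z T
    set μ' := compMeasure M z' T
    set g : Hist Θ T → ℝ≥0∞ := fun h => M T z h (Prod.mk h ⁻¹' S) with hgdef
    set g' : Hist Θ T → ℝ≥0∞ := fun h => M T z' h (Prod.mk h ⁻¹' S) with hg'def
    have hgm : Measurable g := slice_meas M hprob hkernel T z hS
    have hg'm : Measurable g' := slice_meas M hprob hkernel T z' hS
    have hg1 : ∀ h, g h ≤ 1 := fun h => haveI := hprob T z h; prob_le_one
    have hg'1 : ∀ h, g' h ≤ 1 := fun h => haveI := hprob T z' h; prob_le_one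
    set F : Hist Θ T → ℝ≥0∞ := fun h => min (g' h + ENNReal.ofReal Δ) 1 with hFdef
    have hFm : Measurable F := (hg'm.add measurable_const).min measurable_const
    have hF1 : ∀ h, F h ≤ 1 := fun h => min_le_right _ _
    have hFΔ : ∀ h, ENNReal.ofReal Δ ≤ F h := fun h =>
      le_min (le_add_self) (by simpa using ENNReal.ofReal_le_one.mpr hΔ1)
    have hgF : ∀ h, g h ≤ F h := by
      intro h
      refine le_min ?_ (hg1 h)
      have habs := (abs_sub_le_iff.mp (hTV T z z' h _ (hist_succ_meas hS h))).1
      have hgne : g h ≠ ∞ := measure_ne_top _ _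
      have hg'ne : g' h ≠ ∞ := measure_ne_top _ _
      calc g h = ENNReal.ofReal ((g h).toReal) := (ENNReal.ofReal_toReal hgne).symm
        _ ≤ ENNReal.ofReal ((g' h).toReal + Δ) := ENNReal.ofReal_le_ofReal (by linarith)
        _ = g' h + ENNReal.ofReal Δ := by
            rw [ENNReal.ofReal_add ENNReal.toReal_nonneg hΔ0, ENNReal.ofReal_toReal hg'ne]
    -- bounds on integrals
    have hIfin : ∀ (ν : Measure (Hist Θ T)) [IsProbabilityMeasure ν]
        (f : Hist Θ T → ℝ≥0∞), (∀ h, f h ≤ 1) → ∫⁻ h, f h ∂ν ≤ 1 := by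
      intro ν _ f hf
      calc ∫⁻ h, f h ∂ν ≤ ∫⁻ _, 1 ∂ν := lintegral_mono hf
        _ = 1 := by simp
    have hτ : 0 ≤ 1 - (1 - Δ) ^ T := by
      have : (1 - Δ) ^ T ≤ 1 := pow_le_one₀ (by linarith) (by linarith)
      linarith
    have step1 : (∫⁻ h, g h ∂μ).toReal ≤ (∫⁻ h, F h ∂μ).toReal :=
      ENNReal.toReal_mono (ne_top_of_le_ne_top ENNReal.one_ne_top (hIfin μ F hF1))
        (lintegral_mono hgF)
    have step2 : (∫⁻ h, F h ∂μ).toReal - (∫⁻ h, F h ∂μ').toReal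
        ≤ (1 - (1 - Δ) ^ T) * (1 - Δ) := by
      refine tv_lintegral_diff_le μ μ' F hFm Δ 1 _ hΔ0 hΔ1 hτ hFΔ
        (fun h => by simpa using hF1 h) ?_
      intro S' hS'
      exact ih z z' S' hS'
    have step3 : (∫⁻ h, F h ∂μ').toReal ≤ (∫⁻ h, g' h ∂μ').toReal + Δ := by
      have hle : ∫⁻ h, F h ∂μ' ≤ ∫⁻ h, g' h ∂μ' + ENNReal.ofReal Δ := by
        calc ∫⁻ h, F h ∂μ' ≤ ∫⁻ h, (g' h + ENNReal.ofReal Δ) ∂μ' :=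
              lintegral_mono fun h => min_le_left _ _
          _ = ∫⁻ h, g' h ∂μ' + ENNReal.ofReal Δ := by
              rw [lintegral_add_right _ measurable_const]; simp
      have := ENNReal.toReal_mono (ENNReal.add_ne_top.mpr
        ⟨ne_top_of_le_ne_top ENNReal.one_ne_top (hIfin μ' g' hg'1), ENNReal.ofReal_ne_top⟩) hle
      rw [ENNReal.toReal_add (ne_top_of_le_ne_top ENNReal.one_ne_top (hIfin μ' g' hg'1))
        ENNReal.ofReal_ne_top, ENNReal.toReal_ofReal hΔ0] at this
      exact this
    have happly : (compMeasure M z (T+1) S).toReal = (∫⁻ h, g h ∂μ).toReal := by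
      rw [compMeasure_succ_apply M hprob hkernel T z hS]
    have happly' : (compMeasure M z' (T+1) S).toReal = (∫⁻ h, g' h ∂μ').toReal := by
      rw [compMeasure_succ_apply M hprob hkernel T z' hS]
    rw [happly, happly', pow_succ]
    nlinarith [step1, step2, step3]

end Comp

end Aux

/-- If each of `T` (adaptively composed) mechanisms has total variation at
most `Δ`, then the `T`-fold composition has total variation at most `1 − (1−Δ)^T`, and
consequently the η-reconstruction advantage of any attack on the composed mechanism is at
most `(1 − (1−Δ)^T)·(1 − κ_π)`. -/
theorem composition_tv_and_rad {Z aux Θ : Type*} [Countable Z] [MeasurableSpace Θ]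
    (T : ℕ) (Δ : ℝ) (hΔ0 : 0 ≤ Δ) (hΔ1 : Δ ≤ 1)
    (M : (t : ℕ) → Z → Hist Θ t → Measure Θ)
    (hprob : ∀ t z h, IsProbabilityMeasure (M t z h))
    (hkernel : ∀ (t : ℕ) (z : Z) (S : Set Θ), MeasurableSet S →
      Measurable fun h => M t z h S)
    (hTV : ∀ (t : ℕ) (z z' : Z) (h : Hist Θ t) (S : Set Θ), MeasurableSet S →
      |(M t z h S).toReal - (M t z' h S).toReal| ≤ Δ)
    (π : PMF Z) (ℓ : Z → Z → ℝ) (η : ℝ) (hη : 0 ≤ η) (a : Z → aux)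
    (A : Hist Θ T → aux → PMF Z)
    (hA : ∀ (x : aux) (zg : Z), Measurable fun h => A h x zg) :
    (∀ (z z' : Z) (S : Set (Hist Θ T)), MeasurableSet S →
      |(compMeasure M z T S).toReal - (compMeasure M z' T S).toReal| ≤ 1 - (1 - Δ) ^ T) ∧
    (∑' z₁ : Z, π z₁ *
        ∫⁻ h, (∑' zg : Z, Set.indicator {w : Z | ℓ z₁ w ≤ η} (fun w => A h (a z₁) w) zg)
          ∂(compMeasure M z₁ T)).toReal -
      (∑' z₁ : Z, ∑' z₀ : Z, π z₁ * π z₀ *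
        ∫⁻ h, (∑' zg : Z, Set.indicator {w : Z | ℓ z₁ w ≤ η} (fun w => A h (a z₁) w) zg)
          ∂(compMeasure M z₀ T)).toReal ≤
      (1 - (1 - Δ) ^ T) * (1 - ∑' z : Z, ((π z).toReal) ^ 2) := by
  classical
  have htv1 : ∀ (z z' : Z) (S : Set (Hist Θ T)), MeasurableSet S →
      |(compMeasure M z T S).toReal - (compMeasure M z' T S).toReal| ≤ 1 - (1 - Δ) ^ T := by
    intro z z' S hS
    exact abs_sub_le_iff.mpr ⟨compMeasure_tv M Δ hΔ0 hΔ1 hprob hkernel hTV T z z' S hS,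
      compMeasure_tv M Δ hΔ0 hΔ1 hprob hkernel hTV T z' z S hS⟩
  refine ⟨htv1, ?_⟩
  set τ : ℝ := 1 - (1 - Δ) ^ T with hτdef
  have hτ0 : 0 ≤ τ := by
    have : (1 - Δ) ^ T ≤ 1 := pow_le_one₀ (by linarith) (by linarith)
    simp only [hτdef]; linarith
  have hPz : ∀ z : Z, IsProbabilityMeasure (compMeasure M z T) :=
    fun z => compMeasure_prob M hprob hkernel T z
  set F : Z → Hist Θ T → ℝ≥0∞ := fun z₁ h =>
    ∑' zg : Z, Set.indicator {w : Z | ℓ z₁ w ≤ η} (fun w => A h (a z₁) w) zg with hFdef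
  have hFm : ∀ z₁, Measurable (F z₁) := by
    intro z₁
    apply Measurable.ennreal_tsum
    intro zg
    by_cases hmem : zg ∈ {w : Z | ℓ z₁ w ≤ η}
    · simpa [Set.indicator_of_mem hmem] using hA (a z₁) zg
    · simp only [Set.indicator_of_notMem hmem]
      exact measurable_const
  have hF1 : ∀ z₁ h, F z₁ h ≤ 1 := by
    intro z₁ h
    calc F z₁ h ≤ ∑' zg, A h (a z₁) zg :=
        ENNReal.tsum_le_tsum fun zg => Set.indicator_le_self _ _ zg
      _ = 1 := (A h (a z₁)).tsum_coe
  set I : Z → Z → ℝ≥0∞ := fun z₁ z₀ => ∫⁻ h, F z₁ h ∂(compMeasure M z₀ T) with hIdef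
  have hI1 : ∀ z₁ z₀, I z₁ z₀ ≤ 1 := by
    intro z₁ z₀
    haveI := hPz z₀
    calc I z₁ z₀ ≤ ∫⁻ _, 1 ∂(compMeasure M z₀ T) := lintegral_mono (hF1 z₁)
      _ = 1 := by simp
  have hIfin : ∀ z₁ z₀, I z₁ z₀ ≠ ∞ :=
    fun z₁ z₀ => ne_top_of_le_ne_top ENNReal.one_ne_top (hI1 z₁ z₀)
  set b : Z → Z → ℝ := fun z₁ z₀ => (I z₁ z₀).toReal with hbdef
  have hb0 : ∀ z₁ z₀, 0 ≤ b z₁ z₀ := fun _ _ => ENNReal.toReal_nonneg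
  have hb1 : ∀ z₁ z₀, b z₁ z₀ ≤ 1 := fun z₁ z₀ => by
    simpa using ENNReal.toReal_mono ENNReal.one_ne_top (hI1 z₁ z₀)
  have hbdiff : ∀ z₁ z₀, b z₁ z₁ - b z₁ z₀ ≤ τ := by
    intro z₁ z₀
    haveI := hPz z₁; haveI := hPz z₀
    have h := tv_lintegral_diff_le (compMeasure M z₁ T) (compMeasure M z₀ T) (F z₁)
      (hFm z₁) 0 1 τ le_rfl zero_le_one hτ0 (fun h => by simp)
      (fun h => by simpa using hF1 z₁ h)
      (fun S hS => le_trans (le_abs_self _) (htv1 z₁ z₀ S hS))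
    simpa using h
  set p : Z → ℝ := fun z => (π z).toReal with hpdef
  have hp0 : ∀ z, 0 ≤ p z := fun z => ENNReal.toReal_nonneg
  have hp1 : ∀ z, p z ≤ 1 := fun z => by
    simpa using ENNReal.toReal_mono ENNReal.one_ne_top (π.coe_le_one z)
  have hpsum : Summable p :=
    ENNReal.summable_toReal (by rw [π.tsum_coe]; exact ENNReal.one_ne_top)
  have hptsum : (∑' z, p z) = 1 := by
    rw [hpdef, ← ENNReal.tsum_toReal_eq (fun z => π.apply_ne_top z), π.tsum_coe,
      ENNReal.toReal_one]
  have hLHS1 : (∑' z₁ : Z, π z₁ * I z₁ z₁).toReal = ∑' z₁, p z₁ * b z₁ z₁ := by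
    rw [ENNReal.tsum_toReal_eq
      (fun z₁ => ENNReal.mul_ne_top (π.apply_ne_top z₁) (hIfin z₁ z₁))]
    exact tsum_congr fun z₁ => ENNReal.toReal_mul
  have houter_fin : ∀ z₁ : Z, (∑' z₀ : Z, π z₁ * π z₀ * I z₁ z₀) ≠ ∞ := by
    intro z₁
    have hle : (∑' z₀ : Z, π z₁ * π z₀ * I z₁ z₀) ≤ π z₁ := by
      calc (∑' z₀ : Z, π z₁ * π z₀ * I z₁ z₀) ≤ ∑' z₀ : Z, π z₁ * π z₀ :=
          ENNReal.tsum_le_tsum fun z₀ => by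
            calc π z₁ * π z₀ * I z₁ z₀ ≤ π z₁ * π z₀ * 1 :=
                mul_le_mul_right (hI1 _ _) _
              _ = π z₁ * π z₀ := mul_one _
        _ = π z₁ := by rw [ENNReal.tsum_mul_left, π.tsum_coe, mul_one]
    exact ne_top_of_le_ne_top (π.apply_ne_top z₁) hle
  have hLHS2 : (∑' z₁ : Z, ∑' z₀ : Z, π z₁ * π z₀ * I z₁ z₀).toReal
      = ∑' z₁, ∑' z₀, p z₁ * p z₀ * b z₁ z₀ := by
    rw [ENNReal.tsum_toReal_eq houter_fin]
    refine tsum_congr fun z₁ => ?_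
    rw [ENNReal.tsum_toReal_eq (fun z₀ => ENNReal.mul_ne_top
      (ENNReal.mul_ne_top (π.apply_ne_top z₁) (π.apply_ne_top z₀)) (hIfin z₁ z₀))]
    refine tsum_congr fun z₀ => ?_
    rw [ENNReal.toReal_mul, ENNReal.toReal_mul]
  show (∑' z₁ : Z, π z₁ * I z₁ z₁).toReal
      - (∑' z₁ : Z, ∑' z₀ : Z, π z₁ * π z₀ * I z₁ z₀).toReal ≤ τ * (1 - ∑' z : Z, p z ^ 2)
  rw [hLHS1, hLHS2]
  -- summability facts
  have hsum1 : Summable fun z₁ => p z₁ * b z₁ z₁ :=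
    Summable.of_nonneg_of_le (fun z₁ => mul_nonneg (hp0 _) (hb0 _ _))
      (fun z₁ => by nlinarith [mul_nonneg (hp0 z₁) (sub_nonneg.mpr (hb1 z₁ z₁))]) hpsum
  have hsuminner : ∀ z₁, Summable fun z₀ => p z₁ * p z₀ * b z₁ z₀ := by
    intro z₁
    refine Summable.of_nonneg_of_le
      (fun z₀ => mul_nonneg (mul_nonneg (hp0 _) (hp0 _)) (hb0 _ _))
      (fun z₀ => ?_) (hpsum.mul_left (p z₁))
    nlinarith [mul_nonneg (mul_nonneg (hp0 z₁) (hp0 z₀)) (sub_nonneg.mpr (hb1 z₁ z₀))]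
  have hginner_le : ∀ z₁, (∑' z₀, p z₁ * p z₀ * b z₁ z₀) ≤ p z₁ := by
    intro z₁
    have := Summable.tsum_le_tsum (f := fun z₀ => p z₁ * p z₀ * b z₁ z₀)
      (fun z₀ => by
        nlinarith [mul_nonneg (mul_nonneg (hp0 z₁) (hp0 z₀))
          (sub_nonneg.mpr (hb1 z₁ z₀))] : ∀ z₀,
        p z₁ * p z₀ * b z₁ z₀ ≤ p z₁ * p z₀)
      (hsuminner z₁) (hpsum.mul_left (p z₁))
    rwa [tsum_mul_left, hptsum, mul_one] at this
  have hsumouter : Summable fun z₁ => ∑' z₀, p z₁ * p z₀ * b z₁ z₀ :=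
    Summable.of_nonneg_of_le
      (fun z₁ => tsum_nonneg fun z₀ => mul_nonneg (mul_nonneg (hp0 _) (hp0 _)) (hb0 _ _))
      hginner_le hpsum
  have hpsq : Summable fun z => p z ^ 2 :=
    Summable.of_nonneg_of_le (fun z => sq_nonneg _)
      (fun z => by nlinarith [mul_nonneg (hp0 z) (sub_nonneg.mpr (hp1 z))]) hpsum
  -- termwise bound
  have hterm : ∀ z₁, p z₁ * b z₁ z₁ - (∑' z₀, p z₁ * p z₀ * b z₁ z₀)
      ≤ τ * (p z₁ - p z₁ ^ 2) := by
    intro z₁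
    have sA : Summable fun z₀ => p z₁ * b z₁ z₁ * p z₀ := hpsum.mul_left _
    have sB : Summable fun z₀ => τ * p z₁ * p z₀ := hpsum.mul_left _
    have sC : Summable fun z₀ : Z => if z₀ = z₁ then τ * p z₁ * p z₁ else 0 :=
      (hasSum_ite_eq z₁ (τ * p z₁ * p z₁)).summable
    have hlow : ∀ z₀, p z₁ * b z₁ z₁ * p z₀ - τ * p z₁ * p z₀
        + (if z₀ = z₁ then τ * p z₁ * p z₁ else 0) ≤ p z₁ * p z₀ * b z₁ z₀ := by
      intro z₀
      by_cases hz : z₀ = z₁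
      · subst hz; simp only [if_pos rfl, eq_self_iff_true, if_true]; nlinarith [hb0 z₀ z₀]
      · simp only [if_neg hz]
        nlinarith [mul_nonneg (mul_nonneg (hp0 z₁) (hp0 z₀))
          (sub_nonneg.mpr (hbdiff z₁ z₀))]
    have hsumlow : Summable fun z₀ => p z₁ * b z₁ z₁ * p z₀ - τ * p z₁ * p z₀
        + (if z₀ = z₁ then τ * p z₁ * p z₁ else 0) := (sA.sub sB).add sC
    have hts : (∑' z₀ : Z, (p z₁ * b z₁ z₁ * p z₀ - τ * p z₁ * p z₀
        + (if z₀ = z₁ then τ * p z₁ * p z₁ else 0)))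
        = p z₁ * b z₁ z₁ - τ * p z₁ + τ * p z₁ * p z₁ := by
      rw [Summable.tsum_add (sA.sub sB) sC, Summable.tsum_sub sA sB, tsum_mul_left, tsum_mul_left,
        hptsum, mul_one, mul_one, tsum_ite_eq z₁ (fun _ => τ * p z₁ * p z₁)]
    have hge := Summable.tsum_le_tsum hlow hsumlow (hsuminner z₁)
    rw [hts] at hge
    nlinarith [hge]
  have hRHSsum : Summable fun z₁ => τ * (p z₁ - p z₁ ^ 2) :=
    (hpsum.sub hpsq).mul_left τ
  have hfinal := Summable.tsum_le_tsum hterm (hsum1.sub hsumouter) hRHSsum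
  rw [← Summable.tsum_sub hsum1 hsumouter]
  calc (∑' z₁, (p z₁ * b z₁ z₁ - ∑' z₀, p z₁ * p z₀ * b z₁ z₀))
      ≤ ∑' z₁, τ * (p z₁ - p z₁ ^ 2) := hfinal
    _ = τ * (1 - ∑' z, p z ^ 2) := by
        rw [tsum_mul_left, Summable.tsum_sub hpsum hpsq, hptsum]
end
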